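/- arXiv:1309.5638 — 8 statements merged into one kernel-verified Lean document; each statement's English description precedes it below -/
import Mathlib

section
/- Let Γ be a finite abelian group (written additively) and H ⊆ Γ. Let N be a finite set with a weight function w : N → H, extended to subsets by w(A) = Σ_{x∈A} w(x). If A₁ ⊆ A₂ ⊆ A₄ and A₁ ⊆ A₃ ⊆ A₄ with A₂ ≠ A₃ and |A₂| = |A₃| and w(A₂) = w(A₃), then there exists η ∈ H (namely the weight of some element of A₂ \ A₃) such that w(A₂) − w(A₁) is a sum of |A₂| − |A₁| elements of H including the term η, and w(A₄) − w(A₂) is a sum of |A₄| − |A₂| elements of H including the term η. -/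
open Finset

variable {Γ : Type*}

/-- `x` is a sum of `k` elements of `H` (repetitions allowed; the empty sum is `0`). -/
def IsSumOf [AddCommMonoid Γ] (H : Set Γ) (k : ℕ) (x : Γ) : Prop :=
  ∃ f : Fin k → Γ, (∀ t, f t ∈ H) ∧ ∑ t, f t = x

/-- `x` is a sum of `k` elements of `H` one of which is the term `η`. -/
def IsSumOfWith [AddCommMonoid Γ] (H : Set Γ) (k : ℕ) (η x : Γ) : Prop :=
  ∃ f : Fin k → Γ, (∀ t, f t ∈ H) ∧ (∃ t, f t = η) ∧ ∑ t, f t = x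

/-- The Cayley poset order on `Γ × ℤ`: `(γ,i) ⪯ (δ,j)` iff `i ≤ j` and `δ - γ`
is a sum of `j - i` elements of `H`. -/
def CayleyLE [AddCommGroup Γ] (H : Set Γ) (p q : Γ × ℤ) : Prop :=
  p.2 ≤ q.2 ∧ IsSumOf H (q.2 - p.2).toNat (q.1 - p.1)

def CayleyLT [AddCommGroup Γ] (H : Set Γ) (p q : Γ × ℤ) : Prop :=
  CayleyLE H p q ∧ p ≠ q

/-- `P` contains the diamond `D₂` as a weak subposet: four pairwise distinct
elements `p₁ ≤ p₂, p₃ ≤ p₄`. -/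
def HasDiamond [AddCommGroup Γ] (H : Set Γ) (P : Set (Γ × ℤ)) : Prop :=
  ∃ p₁ ∈ P, ∃ p₂ ∈ P, ∃ p₃ ∈ P, ∃ p₄ ∈ P,
    p₁ ≠ p₂ ∧ p₁ ≠ p₃ ∧ p₁ ≠ p₄ ∧ p₂ ≠ p₃ ∧ p₂ ≠ p₄ ∧ p₃ ≠ p₄ ∧
    CayleyLE H p₁ p₂ ∧ CayleyLE H p₁ p₃ ∧ CayleyLE H p₂ p₄ ∧ CayleyLE H p₃ p₄

/-- `P` contains a strong chain: `x ≺ y ≺ z` such that some `η ∈ H` can be used both in a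
`(y.2 - x.2)`-term `H`-sum representing `y.1 - x.1` and in a `(z.2 - y.2)`-term `H`-sum
representing `z.1 - y.1`. -/
def HasStrongChain [AddCommGroup Γ] (H : Set Γ) (P : Set (Γ × ℤ)) : Prop :=
  ∃ x ∈ P, ∃ y ∈ P, ∃ z ∈ P, CayleyLT H x y ∧ CayleyLT H y z ∧
    ∃ η ∈ H, IsSumOfWith H (y.2 - x.2).toNat η (y.1 - x.1) ∧
             IsSumOfWith H (z.2 - y.2).toNat η (z.1 - y.1)

/-- A Cayley poset is strongly diamond-free if it has no diamond and no strong chain. -/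
def StronglyDiamondFree [AddCommGroup Γ] (H : Set Γ) (P : Set (Γ × ℤ)) : Prop :=
  ¬ HasDiamond H P ∧ ¬ HasStrongChain H P

/-- `H` is aperiodic: the gcd of the lengths of `H`-sums equal to `0` is `1`. -/
def Aperiodic [AddCommMonoid Γ] (H : Set Γ) : Prop :=
  ∀ d : ℕ, (∀ ℓ : ℕ, 1 ≤ ℓ → IsSumOf H ℓ (0 : Γ) → d ∣ ℓ) → d = 1

lemma isSumOfWith_sum {Γ α : Type*} [AddCommGroup Γ] [DecidableEq α]
    (H : Set Γ) (w : α → Γ) (hw : ∀ x, w x ∈ H)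
    (S : Finset α) {x₀ : α} (hx₀ : x₀ ∈ S) :
    IsSumOfWith H S.card (w x₀) (∑ x ∈ S, w x) := by
  refine ⟨fun t => w (S.equivFin.symm t), fun t => hw _, ⟨S.equivFin ⟨x₀, hx₀⟩, by simp⟩, ?_⟩
  rw [show ∑ t : Fin S.card, (fun t => w (S.equivFin.symm t : α)) t
      = ∑ x ∈ S.attach, w x from Equiv.sum_comp S.equivFin.symm (fun x => w (x : α))]
  exact S.sum_attach w

/-- in a diamond `A₁ ⊆ A₂, A₃ ⊆ A₄` with `A₂ ≠ A₃`, `|A₂| = |A₃|` and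
`w(A₂) = w(A₃)`, some `η ∈ H` (the weight of an element of `A₂ \ A₃`) appears both in an
`(|A₂| - |A₁|)`-term `H`-sum representing `w(A₂) - w(A₁)` and in an `(|A₄| - |A₂|)`-term
`H`-sum representing `w(A₄) - w(A₂)`. -/
theorem strong_chain_from_diamond {Γ α : Type*} [AddCommGroup Γ] [DecidableEq α]
    (H : Set Γ) (w : α → Γ) (hw : ∀ x, w x ∈ H)
    (A₁ A₂ A₃ A₄ : Finset α)
    (h12 : A₁ ⊆ A₂) (h24 : A₂ ⊆ A₄) (h13 : A₁ ⊆ A₃) (h34 : A₃ ⊆ A₄)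
    (hne : A₂ ≠ A₃) (hcard : A₂.card = A₃.card)
    (hweq : ∑ x ∈ A₂, w x = ∑ x ∈ A₃, w x) :
    ∃ η ∈ H, (∃ x ∈ A₂ \ A₃, w x = η) ∧
      IsSumOfWith H (A₂.card - A₁.card) η ((∑ x ∈ A₂, w x) - ∑ x ∈ A₁, w x) ∧
      IsSumOfWith H (A₄.card - A₂.card) η ((∑ x ∈ A₄, w x) - ∑ x ∈ A₂, w x) := by
  have hdiff : (A₂ \ A₃).Nonempty := by
    rw [Finset.sdiff_nonempty]
    intro hsub
    exact hne (Finset.eq_of_subset_of_card_le hsub hcard.ge)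
  obtain ⟨x₀, hx₀⟩ := hdiff
  have hx₀2 := (Finset.mem_sdiff.mp hx₀).1
  have hx₀3 := (Finset.mem_sdiff.mp hx₀).2
  refine ⟨w x₀, hw x₀, ⟨x₀, hx₀, rfl⟩, ?_, ?_⟩
  · have h1 : ((∑ x ∈ A₂, w x) - ∑ x ∈ A₁, w x) = ∑ x ∈ A₂ \ A₁, w x :=
      (Finset.sum_sdiff_eq_sub h12).symm
    have h2 : A₂.card - A₁.card = (A₂ \ A₁).card := (Finset.card_sdiff_of_subset h12).symm
    rw [h1, h2]
    exact isSumOfWith_sum H w hw _ (Finset.mem_sdiff.mpr ⟨hx₀2, fun h => hx₀3 (h13 h)⟩)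
  · have h1 : ((∑ x ∈ A₄, w x) - ∑ x ∈ A₂, w x) = ∑ x ∈ A₄ \ A₃, w x := by
      rw [hweq]; exact (Finset.sum_sdiff_eq_sub h34).symm
    have h2 : A₄.card - A₂.card = (A₄ \ A₃).card := by
      rw [hcard]; exact (Finset.card_sdiff_of_subset h34).symm
    rw [h1, h2]
    exact isSumOfWith_sum H w hw _ (Finset.mem_sdiff.mpr ⟨h24 hx₀2, hx₀3⟩)
end

section
/- Let Γ be a finite abelian group, H ⊆ Γ, and let Π be a finite set of pairs (γ, j) ∈ Γ × ℤ that is strongly diamond-free: (1) the Cayley poset order on Π (where (γ,i) ⪯ (δ,j) iff j ≥ i and δ − γ is a sum of j − i elements of H, with sign conventions as in the definition) contains no diamond, and (2) Π contains no strong chain, i.e., no three elements (γ₁,j₁) ≺ (γ₂,j₂) ≺ (γ₃,j₃) such that some η ∈ H appears both in some (j₂−j₁)-term H-sum representing γ₂−γ₁ and in some (j₃−j₂)-term H-sum representing γ₃−γ₂. Then for any finite set N with weight function w : N → H, the family F = { A ⊆ N : (w(A), |A| − ⌊|N|/2⌋) ∈ Π } is diamond-free, i.e., contains no four sets A₁ ⊆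 A₂, A₃ ⊆ A₄ with A₂, A₃ distinct and incomparable. -/
open Finset

variable {Γ : Type*}

lemma sum_diff_rep {Γ α : Type*} [AddCommGroup Γ] [DecidableEq α]
    (H : Set Γ) (w : α → Γ) (hw : ∀ x, w x ∈ H) {A B : Finset α} (h : A ⊆ B) :
    ∃ f : Fin (B \ A).card → Γ, (∀ t, f t ∈ H) ∧
      (∑ t, f t) = ∑ x ∈ B, w x - ∑ x ∈ A, w x ∧ ∀ a ∈ B \ A, ∃ t, f t = w a := by
  classical
  let e := (B \ A).equivFin
  refine ⟨fun t => w ((e.symm t).1), fun t => hw _, ?_, fun a ha => ⟨e ⟨a, ha⟩, by simp⟩⟩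
  have h1 : (∑ t, w ((e.symm t).1)) = ∑ s : {x // x ∈ B \ A}, w s.1 :=
    Equiv.sum_comp e.symm (fun s => w s.1)
  rw [h1, Finset.sum_coe_sort (B \ A) w, eq_sub_iff_add_eq, Finset.sum_sdiff h]

lemma cayleyLE_pair {Γ α : Type*} [AddCommGroup Γ] [DecidableEq α]
    (H : Set Γ) (w : α → Γ) (hw : ∀ x, w x ∈ H) (m : ℤ) {A B : Finset α} (h : A ⊆ B) :
    CayleyLE H (∑ x ∈ A, w x, (A.card : ℤ) - m) (∑ x ∈ B, w x, (B.card : ℤ) - m) := by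
  have hle := Finset.card_le_card h
  have hcard := Finset.card_sdiff_of_subset h
  refine ⟨by simp; omega, ?_⟩
  have ht : ((((B.card : ℤ) - m)) - ((A.card : ℤ) - m)).toNat = (B \ A).card := by omega
  obtain ⟨f, hf1, hf2, _⟩ := sum_diff_rep H w hw h
  rw [show ((∑ x ∈ B, w x, (B.card : ℤ) - m).2 - (∑ x ∈ A, w x, (A.card : ℤ) - m).2).toNat
      = (B \ A).card from ht]
  exact ⟨f, hf1, hf2⟩

/-- if the Cayley poset `P` is strongly diamond-free, then for any finite set
(here the finite type `α`) with weight function `w` taking values in `H`, the family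
`{ A : (w(A), |A| - ⌊n/2⌋) ∈ P }` is diamond-free. -/
theorem family_diamondFree_of_stronglyDiamondFree {Γ α : Type*} [AddCommGroup Γ]
    [Fintype α] [DecidableEq α]
    (H : Set Γ) (P : Set (Γ × ℤ)) (hfin : P.Finite)
    (hP : StronglyDiamondFree H P)
    (w : α → Γ) (hw : ∀ x, w x ∈ H) :
    ¬ ∃ A₁ A₂ A₃ A₄ : Finset α,
      (∑ x ∈ A₁, w x, (A₁.card : ℤ) - (Fintype.card α / 2 : ℕ)) ∈ P ∧
      (∑ x ∈ A₂, w x, (A₂.card : ℤ) - (Fintype.card α / 2 : ℕ)) ∈ P ∧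
      (∑ x ∈ A₃, w x, (A₃.card : ℤ) - (Fintype.card α / 2 : ℕ)) ∈ P ∧
      (∑ x ∈ A₄, w x, (A₄.card : ℤ) - (Fintype.card α / 2 : ℕ)) ∈ P ∧
      A₁ ⊆ A₂ ∧ A₁ ⊆ A₃ ∧ A₂ ⊆ A₄ ∧ A₃ ⊆ A₄ ∧
      A₂ ≠ A₃ ∧ ¬ A₂ ⊆ A₃ ∧ ¬ A₃ ⊆ A₂ := by
  classical
  rintro ⟨A₁, A₂, A₃, A₄, h1, h2, h3, h4, h12, h13, h24, h34, hne, hn23, hn32⟩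
  obtain ⟨hD, hS⟩ := hP
  set m : ℤ := ((Fintype.card α / 2 : ℕ) : ℤ) with hm
  set p₁ := (∑ x ∈ A₁, w x, (A₁.card : ℤ) - m)
  set p₂ := (∑ x ∈ A₂, w x, (A₂.card : ℤ) - m)
  set p₃ := (∑ x ∈ A₃, w x, (A₃.card : ℤ) - m)
  set p₄ := (∑ x ∈ A₄, w x, (A₄.card : ℤ) - m)
  have hA12 : A₁ ≠ A₂ := fun e => hn23 (e ▸ h13)
  have hA13 : A₁ ≠ A₃ := fun e => hn32 (e ▸ h12)
  have hA24 : A₂ ≠ A₄ := fun e => hn32 (e ▸ h34)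
  have hA34 : A₃ ≠ A₄ := fun e => hn23 (e ▸ h24)
  have hc12 : A₁.card < A₂.card := Finset.card_lt_card (h12.ssubset_of_ne hA12)
  have hc13 : A₁.card < A₃.card := Finset.card_lt_card (h13.ssubset_of_ne hA13)
  have hc24 : A₂.card < A₄.card := Finset.card_lt_card (h24.ssubset_of_ne hA24)
  have hc34 : A₃.card < A₄.card := Finset.card_lt_card (h34.ssubset_of_ne hA34)
  have l12 : CayleyLE H p₁ p₂ := cayleyLE_pair H w hw m h12
  have l13 : CayleyLE H p₁ p₃ := cayleyLE_pair H w hw m h13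
  have l24 : CayleyLE H p₂ p₄ := cayleyLE_pair H w hw m h24
  have l34 : CayleyLE H p₃ p₄ := cayleyLE_pair H w hw m h34
  have e12 : p₁ ≠ p₂ := fun e => by simp [p₁, p₂, Prod.ext_iff] at e; omega
  have e13 : p₁ ≠ p₃ := fun e => by simp [p₁, p₃, Prod.ext_iff] at e; omega
  have e14 : p₁ ≠ p₄ := fun e => by simp [p₁, p₄, Prod.ext_iff] at e; omega
  have e24 : p₂ ≠ p₄ := fun e => by simp [p₂, p₄, Prod.ext_iff] at e; omega
  have e34 : p₃ ≠ p₄ := fun e => by simp [p₃, p₄, Prod.ext_iff] at e; omega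
  by_cases e23 : p₂ = p₃
  · -- strong chain
    obtain ⟨a, ha2, ha3⟩ := Finset.not_subset.mp hn23
    have ha1 : a ∉ A₁ := fun h => ha3 (h13 h)
    have ha4 : a ∈ A₄ := h24 ha2
    have hcard23 : A₂.card = A₃.card := by
      have := (Prod.ext_iff.mp e23).2
      simp [p₂, p₃] at this; omega
    have hsum23 : (∑ x ∈ A₂, w x) = ∑ x ∈ A₃, w x := (Prod.ext_iff.mp e23).1
    apply hS
    refine ⟨p₁, h1, p₂, h2, p₄, h4, ⟨l12, e12⟩, ⟨l24, e24⟩, w a, hw a, ?_, ?_⟩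
    · obtain ⟨f, hf1, hf2, hf3⟩ := sum_diff_rep H w hw h12
      have ht : (p₂.2 - p₁.2).toNat = (A₂ \ A₁).card := by
        have := Finset.card_sdiff_of_subset h12
        simp only [p₁, p₂]; omega
      rw [ht]
      exact ⟨f, hf1, hf3 a (Finset.mem_sdiff.mpr ⟨ha2, ha1⟩), hf2⟩
    · obtain ⟨f, hf1, hf2, hf3⟩ := sum_diff_rep H w hw h34
      have ht : (p₄.2 - p₂.2).toNat = (A₄ \ A₃).card := by
        have := Finset.card_sdiff_of_subset h34
        simp only [p₂, p₄]; omega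
      rw [ht]
      refine ⟨f, hf1, hf3 a (Finset.mem_sdiff.mpr ⟨ha4, ha3⟩), ?_⟩
      rw [hf2]
      simp only [p₂, p₄, hsum23]
  · exact hD ⟨p₁, h1, p₂, h2, p₃, h3, p₄, h4, e12, e13, e14, e23, e24, e34, l12, l13, l24, l34⟩
end

section
/- Let Γ be a finite abelian group of order m, H ⊆ Γ nonempty, and let Π ⊆ Γ × ℤ be a finite Cayley poset with no strong chain (i.e., no three elements (γ₁,j₁) ≺ (γ₂,j₂) ≺ (γ₃,j₃) where some η ∈ H can be used in both an H-sum representation of γ₂ − γ₁ with j₂ − j₁ terms and one of γ₃ − γ₂ with j₃ − j₂ terms). Then |Π| ≤ 2m. -/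
open Finset

variable {Γ : Type*}

lemma step_aux {Γ : Type*} [AddCommGroup Γ] {H : Set Γ} {η : Γ} (hη : η ∈ H)
    {p q : Γ × ℤ} (hf : p.1 - p.2 • η = q.1 - q.2 • η) (hlt : p.2 < q.2) :
    CayleyLT H p q ∧ IsSumOfWith H (q.2 - p.2).toNat η (q.1 - p.1) := by
  set k := (q.2 - p.2).toNat with hkdef
  have hk : (k : ℤ) = q.2 - p.2 := Int.toNat_of_nonneg (by omega)
  have hkpos : 0 < k := by omega
  have hx : q.1 - p.1 = k • η := by
    have h1 : q.1 - p.1 = (q.2 - p.2) • η := by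
      rw [sub_smul, sub_eq_sub_iff_sub_eq_sub]
      exact hf.symm
    rw [h1, ← hk, natCast_zsmul]
  have hsum : ∑ _t : Fin k, η = q.1 - p.1 := by
    rw [Finset.sum_const, Finset.card_univ, Fintype.card_fin, hx]
  refine ⟨⟨⟨le_of_lt hlt, ⟨fun _ => η, fun _ => hη, hsum⟩⟩, ?_⟩,
    ⟨fun _ => η, fun _ => hη, ⟨⟨0, hkpos⟩, rfl⟩, hsum⟩⟩
  intro h; rw [h] at hlt; exact lt_irrefl _ hlt

lemma chain_aux {Γ : Type*} [AddCommGroup Γ] {H : Set Γ} {η : Γ} (hη : η ∈ H)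
    {P : Finset (Γ × ℤ)} {p q r : Γ × ℤ} (hp : p ∈ P) (hq : q ∈ P) (hr : r ∈ P)
    (hfpq : p.1 - p.2 • η = q.1 - q.2 • η) (hfqr : q.1 - q.2 • η = r.1 - r.2 • η)
    (h1 : p.2 < q.2) (h2 : q.2 < r.2) : HasStrongChain H (P : Set (Γ × ℤ)) := by
  obtain ⟨hlt1, hs1⟩ := step_aux hη hfpq h1
  obtain ⟨hlt2, hs2⟩ := step_aux hη hfqr h2
  exact ⟨p, hp, q, hq, r, hr, hlt1, hlt2, η, hη, hs1, hs2⟩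

/-- a finite Cayley poset with no strong chain (with respect to a nonempty
`H ⊆ Γ`, `Γ` a finite abelian group of order `m`) has at most `2m` elements. -/
theorem card_le_of_no_strongChain {Γ : Type*} [AddCommGroup Γ] [Fintype Γ]
    (H : Set Γ) (hH : H.Nonempty) (P : Finset (Γ × ℤ))
    (hP : ¬ HasStrongChain H (P : Set (Γ × ℤ))) :
    P.card ≤ 2 * Fintype.card Γ := by
  classical
  obtain ⟨η, hη⟩ := hH
  set f : Γ × ℤ → Γ := fun x => x.1 - x.2 • η with hfdef
  have key : ∀ a, (P.filter (fun x => f x = a)).card ≤ 2 := by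
    intro a
    by_contra hcon
    push_neg at hcon
    obtain ⟨p, hp, q, hq, r, hr, hpq, hpr, hqr⟩ := Finset.two_lt_card.mp hcon
    simp only [Finset.mem_filter] at hp hq hr
    have hfpq : f p = f q := hp.2.trans hq.2.symm
    have hfqr : f q = f r := hq.2.trans hr.2.symm
    have hfpr : f p = f r := hfpq.trans hfqr
    have hne : ∀ {x y : Γ × ℤ}, f x = f y → x ≠ y → x.2 ≠ y.2 := by
      intro x y hf hxy h2
      apply hxy
      have h' : x.1 - x.2 • η = y.1 - y.2 • η := hf
      rw [h2, sub_left_inj] at h'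
      exact Prod.ext h' h2
    have d1 := hne hfpq hpq
    have d2 := hne hfqr hqr
    have d3 := hne hfpr hpr
    rcases lt_trichotomy p.2 q.2 with h1 | h1 | h1
    · rcases lt_trichotomy q.2 r.2 with h2 | h2 | h2
      · exact hP (chain_aux hη hp.1 hq.1 hr.1 hfpq hfqr h1 h2)
      · exact d2 h2
      · rcases lt_trichotomy p.2 r.2 with h3 | h3 | h3
        · exact hP (chain_aux hη hp.1 hr.1 hq.1 hfpr hfqr.symm h3 h2)
        · exact d3 h3
        · exact hP (chain_aux hη hr.1 hp.1 hq.1 hfpr.symm hfpq h3 h1)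
    · exact d1 h1
    · rcases lt_trichotomy p.2 r.2 with h2 | h2 | h2
      · exact hP (chain_aux hη hq.1 hp.1 hr.1 hfpq.symm hfpr h1 h2)
      · exact d3 h2
      · rcases lt_trichotomy q.2 r.2 with h3 | h3 | h3
        · exact hP (chain_aux hη hq.1 hr.1 hp.1 hfqr hfpr.symm h3 h2)
        · exact d2 h3
        · exact hP (chain_aux hη hr.1 hq.1 hp.1 hfqr.symm hfpq.symm h3 h1)
  calc P.card ≤ 2 * (P.image f).card :=
        Finset.card_le_mul_card_image P 2 (fun b _ => key b)
    _ ≤ 2 * Fintype.card Γ := Nat.mul_le_mul_left 2 ((P.image f).card_le_univ)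
end

section
/- Let Γ = ℤ/7ℤ and H = {2, 3, 5}. The Cayley poset Π consisting of (g, 3) for g ∉ {0, 1, 5} (mod 7), (2, 2), (3, 2), (5, 2), and (g, 1) for g ≢ 0 (mod 7), has 13 elements and is strongly diamond-free. -/
open Finset

variable {Γ : Type*}

-- auxiliary lemmas

lemma sdf_sum0 [AddCommMonoid Γ] {H : Set Γ} {x : Γ} (h : IsSumOf H 0 x) : x = 0 := by
  obtain ⟨f, -, hs⟩ := h
  simpa using hs.symm

lemma sdf_sum1 [AddCommMonoid Γ] {H : Set Γ} {x : Γ} (h : IsSumOf H 1 x) : x ∈ H := by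
  obtain ⟨f, hf, hs⟩ := h
  rw [Fin.sum_univ_one] at hs
  exact hs ▸ hf 0

lemma sdf_sumWith1 [AddCommMonoid Γ] {H : Set Γ} {η x : Γ} (h : IsSumOfWith H 1 η x) :
    x = η := by
  obtain ⟨f, -, ⟨t, ht⟩, hs⟩ := h
  rw [Fin.sum_univ_one] at hs
  rw [← hs, ← ht]
  congr
  exact Subsingleton.elim _ _

lemma sdf_eq_of_le [AddCommGroup Γ] {H : Set Γ} {p q : Γ × ℤ}
    (hle : CayleyLE H p q) (h2 : p.2 = q.2) : p = q := by
  have hk : (q.2 - p.2).toNat = 0 := by omega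
  have := sdf_sum0 (hk ▸ hle.2)
  have h1 : p.1 = q.1 := by
    have := sub_eq_zero.mp this
    exact this.symm
  exact Prod.ext h1 h2

lemma sdf_lt_level [AddCommGroup Γ] {H : Set Γ} {p q : Γ × ℤ}
    (hle : CayleyLE H p q) (hne : p ≠ q) : p.2 < q.2 := by
  rcases lt_or_eq_of_le hle.1 with h | h
  · exact h
  · exact absurd (sdf_eq_of_le hle h) hne

lemma sdf_keyD : ∀ a b h : ZMod 7, ¬((a = 2 ∨ a = 3 ∨ a = 5) ∧ (b = 2 ∨ b = 3 ∨ b = 5) ∧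
    a ≠ b ∧ h ≠ 0 ∧ h ≠ 1 ∧ h ≠ 5 ∧
    (h - a = 2 ∨ h - a = 3 ∨ h - a = 5) ∧ (h - b = 2 ∨ h - b = 3 ∨ h - b = 5)) := by
  decide

lemma sdf_keyC : ∀ g a h : ZMod 7, ¬(g ≠ 0 ∧ (a = 2 ∨ a = 3 ∨ a = 5) ∧
    h ≠ 0 ∧ h ≠ 1 ∧ h ≠ 5 ∧ a - g = h - a ∧
    (h - a = 2 ∨ h - a = 3 ∨ h - a = 5)) := by
  decide

/-- in `ℤ/7ℤ` with `H = {2,3,5}`, the Cayley poset consisting of `(g,3)` for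
`g ∉ {0,1,5}`, `(2,2)`, `(3,2)`, `(5,2)`, and `(g,1)` for `g ≠ 0`, has `13` elements and
is strongly diamond-free. -/
theorem example3 :
    ({p : ZMod 7 × ℤ | (p.2 = 3 ∧ p.1 ≠ 0 ∧ p.1 ≠ 1 ∧ p.1 ≠ 5) ∨
        (p.2 = 2 ∧ (p.1 = 2 ∨ p.1 = 3 ∨ p.1 = 5)) ∨
        (p.2 = 1 ∧ p.1 ≠ 0)}).ncard = 13 ∧
    StronglyDiamondFree ({2, 3, 5} : Set (ZMod 7))
      {p : ZMod 7 × ℤ | (p.2 = 3 ∧ p.1 ≠ 0 ∧ p.1 ≠ 1 ∧ p.1 ≠ 5) ∨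
        (p.2 = 2 ∧ (p.1 = 2 ∨ p.1 = 3 ∨ p.1 = 5)) ∨
        (p.2 = 1 ∧ p.1 ≠ 0)} := by
  constructor
  · -- cardinality
    have hset : ({p : ZMod 7 × ℤ | (p.2 = 3 ∧ p.1 ≠ 0 ∧ p.1 ≠ 1 ∧ p.1 ≠ 5) ∨
        (p.2 = 2 ∧ (p.1 = 2 ∨ p.1 = 3 ∨ p.1 = 5)) ∨
        (p.2 = 1 ∧ p.1 ≠ 0)}) =
        (↑({((2:ZMod 7),(3:ℤ)),(3,3),(4,3),(6,3),(2,2),(3,2),(5,2),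
           (1,1),(2,1),(3,1),(4,1),(5,1),(6,1)} : Finset (ZMod 7 × ℤ)) : Set (ZMod 7 × ℤ)) := by
      ext ⟨g, i⟩
      simp only [Set.mem_setOf_eq, Finset.coe_insert, Set.mem_insert_iff,
        Finset.coe_singleton, Set.mem_singleton_iff, Prod.mk.injEq]
      constructor
      · rintro (⟨rfl, h1, h2, h3⟩ | ⟨rfl, h⟩ | ⟨rfl, h⟩) <;> revert g <;> decide
      · rintro (⟨rfl, rfl⟩ | ⟨rfl, rfl⟩ | ⟨rfl, rfl⟩ | ⟨rfl, rfl⟩ | ⟨rfl, rfl⟩ | ⟨rfl, rfl⟩ |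
          ⟨rfl, rfl⟩ | ⟨rfl, rfl⟩ | ⟨rfl, rfl⟩ | ⟨rfl, rfl⟩ | ⟨rfl, rfl⟩ | ⟨rfl, rfl⟩ |
          ⟨rfl, rfl⟩) <;> norm_num <;> decide
    rw [hset, Set.ncard_coe_finset]
    set_option maxHeartbeats 1000000 in decide
  · constructor
    · -- no diamond
      rintro ⟨p1, h1, p2, h2, p3, h3, p4, h4, n12, n13, n14, n23, n24, n34,
        le12, le13, le24, le34⟩
      simp only [Set.mem_setOf_eq] at h1 h2 h3 h4
      have e1 : p1.2 = 3 ∨ p1.2 = 2 ∨ p1.2 = 1 := by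
        rcases h1 with ⟨h, -⟩ | ⟨h, -⟩ | ⟨h, -⟩ <;> omega
      have e2 : p2.2 = 3 ∨ p2.2 = 2 ∨ p2.2 = 1 := by
        rcases h2 with ⟨h, -⟩ | ⟨h, -⟩ | ⟨h, -⟩ <;> omega
      have e3 : p3.2 = 3 ∨ p3.2 = 2 ∨ p3.2 = 1 := by
        rcases h3 with ⟨h, -⟩ | ⟨h, -⟩ | ⟨h, -⟩ <;> omega
      have e4 : p4.2 = 3 ∨ p4.2 = 2 ∨ p4.2 = 1 := by
        rcases h4 with ⟨h, -⟩ | ⟨h, -⟩ | ⟨h, -⟩ <;> omega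
      have L1 := sdf_lt_level le12 n12
      have L2 := sdf_lt_level le13 n13
      have L3 := sdf_lt_level le24 n24
      have L4 := sdf_lt_level le34 n34
      have v1 : p1.2 = 1 := by omega
      have v2 : p2.2 = 2 := by omega
      have v3 : p3.2 = 2 := by omega
      have v4 : p4.2 = 3 := by omega
      have ha : p2.1 = 2 ∨ p2.1 = 3 ∨ p2.1 = 5 := by
        rcases h2 with ⟨h, -⟩ | ⟨-, h⟩ | ⟨h, -⟩ <;> first | exact h | omega
      have hb : p3.1 = 2 ∨ p3.1 = 3 ∨ p3.1 = 5 := by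
        rcases h3 with ⟨h, -⟩ | ⟨-, h⟩ | ⟨h, -⟩ <;> first | exact h | omega
      have hh : p4.1 ≠ 0 ∧ p4.1 ≠ 1 ∧ p4.1 ≠ 5 := by
        rcases h4 with ⟨-, h⟩ | ⟨h, -⟩ | ⟨h, -⟩ <;> first | exact h | omega
      have k24 : (p4.2 - p2.2).toNat = 1 := by omega
      have k34 : (p4.2 - p3.2).toNat = 1 := by omega
      have s24 := sdf_sum1 (k24 ▸ le24.2)
      have s34 := sdf_sum1 (k34 ▸ le34.2)
      simp only [Set.mem_insert_iff, Set.mem_singleton_iff] at s24 s34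
      have nab : p2.1 ≠ p3.1 := fun e => n23 (Prod.ext e (v2.trans v3.symm))
      exact sdf_keyD p2.1 p3.1 p4.1 ⟨ha, hb, nab, hh.1, hh.2.1, hh.2.2, s24, s34⟩
    · -- no strong chain
      rintro ⟨x, hx, y, hy, z, hz, ⟨lexy, nxy⟩, ⟨leyz, nyz⟩, η, hη, w1, w2⟩
      simp only [Set.mem_setOf_eq] at hx hy hz
      have ex : x.2 = 3 ∨ x.2 = 2 ∨ x.2 = 1 := by
        rcases hx with ⟨h, -⟩ | ⟨h, -⟩ | ⟨h, -⟩ <;> omega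
      have ey : y.2 = 3 ∨ y.2 = 2 ∨ y.2 = 1 := by
        rcases hy with ⟨h, -⟩ | ⟨h, -⟩ | ⟨h, -⟩ <;> omega
      have ez : z.2 = 3 ∨ z.2 = 2 ∨ z.2 = 1 := by
        rcases hz with ⟨h, -⟩ | ⟨h, -⟩ | ⟨h, -⟩ <;> omega
      have L1 := sdf_lt_level lexy nxy
      have L2 := sdf_lt_level leyz nyz
      have vx : x.2 = 1 := by omega
      have vy : y.2 = 2 := by omega
      have vz : z.2 = 3 := by omega
      have ha : y.1 = 2 ∨ y.1 = 3 ∨ y.1 = 5 := by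
        rcases hy with ⟨h, -⟩ | ⟨-, h⟩ | ⟨h, -⟩ <;> first | exact h | omega
      have hg : x.1 ≠ 0 := by
        rcases hx with ⟨h, -⟩ | ⟨h, -⟩ | ⟨-, h⟩ <;> first | exact h | omega
      have hh : z.1 ≠ 0 ∧ z.1 ≠ 1 ∧ z.1 ≠ 5 := by
        rcases hz with ⟨-, h⟩ | ⟨h, -⟩ | ⟨h, -⟩ <;> first | exact h | omega
      have k1 : (y.2 - x.2).toNat = 1 := by omega
      have k2 : (z.2 - y.2).toNat = 1 := by omega
      have q1 : y.1 - x.1 = η := sdf_sumWith1 (k1 ▸ w1)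
      have q2 : z.1 - y.1 = η := sdf_sumWith1 (k2 ▸ w2)
      simp only [Set.mem_insert_iff, Set.mem_singleton_iff] at hη
      exact sdf_keyC x.1 y.1 z.1 ⟨hg, ha, hh.1, hh.2.1, hh.2.2, q1.trans q2.symm, q2 ▸ hη⟩
end

section
/- Let k ≥ 2, m = 4k − 1, Γ = ℤ/mℤ, and H = {2k−1, 2k}. The Cayley poset Π consisting of (i, 4) for i = k+2, ..., 3k−3 and (i, j) for i = k, k+1, ..., 3k−1 and j = 1, 2, 3, has 2m − 2 elements and is strongly diamond-free. -/
open Finset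

variable {Γ : Type*}

section A
variable {G : Type*}

lemma isSumOf_zero' [AddCommMonoid G] {H : Set G} {x : G} (h : IsSumOf H 0 x) : x = 0 := by
  obtain ⟨f, -, rfl⟩ := h
  simp

lemma isSumOf_succ_iff [AddCommGroup G] {H : Set G} {d : ℕ} {x : G} :
    IsSumOf H (d + 1) x ↔ ∃ h ∈ H, IsSumOf H d (x - h) := by
  constructor
  · rintro ⟨f, hf, rfl⟩
    refine ⟨f 0, hf 0, fun t => f t.succ, fun t => hf _, ?_⟩
    rw [Fin.sum_univ_succ]
    abel
  · rintro ⟨h, hh, f, hf, hsum⟩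
    refine ⟨Fin.cons h f, ?_, ?_⟩
    · intro t
      refine Fin.cases hh (fun i => hf i) t
    · rw [Fin.sum_univ_succ]
      simp only [Fin.cons_zero, Fin.cons_succ]
      rw [hsum]; abel

lemma isSumOf_pair [AddCommGroup G] {a b : G} :
    ∀ {d : ℕ} {x : G}, IsSumOf {a, b} d x → ∃ s : ℕ, s ≤ d ∧ x = s • a + (d - s) • b := by
  intro d
  induction d with
  | zero =>
    intro x hx
    exact ⟨0, le_refl 0, by simp [isSumOf_zero' hx]⟩
  | succ d ih =>
    intro x hx
    rw [isSumOf_succ_iff] at hx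
    obtain ⟨h, hh, hsum⟩ := hx
    obtain ⟨s, hs, hx⟩ := ih hsum
    simp only [Set.mem_insert_iff, Set.mem_singleton_iff] at hh
    rcases hh with rfl | rfl
    · refine ⟨s + 1, by omega, ?_⟩
      have hds : (d + 1) - (s + 1) = d - s := by omega
      have hx' : x = s • h + (d - s) • b + h := by rw [← hx]; abel
      rw [hx', hds, succ_nsmul]
      abel
    · refine ⟨s, by omega, ?_⟩
      have hds : (d + 1) - s = (d - s) + 1 := by omega
      have hx' : x = s • a + (d - s) • h + h := by rw [← hx]; abel
      rw [hx', hds, succ_nsmul]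
      abel

lemma isSumOfWith_one [AddCommMonoid G] {H : Set G} {η x : G} (h : IsSumOfWith H 1 η x) :
    x = η := by
  obtain ⟨f, -, ⟨t, ht⟩, hsum⟩ := h
  rw [Fin.sum_univ_one] at hsum
  rw [← hsum, ← ht]
  congr 1
  exact Subsingleton.elim _ _

lemma isSumOfWith_two [AddCommMonoid G] {H : Set G} {η x : G} (h : IsSumOfWith H 2 η x) :
    ∃ c ∈ H, x = η + c := by
  obtain ⟨f, hf, ⟨t, ht⟩, hsum⟩ := h
  rw [Fin.sum_univ_two] at hsum
  rcases t with ⟨tv, htv⟩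
  interval_cases tv
  · simp only [Fin.mk_zero] at ht
    exact ⟨f 1, hf 1, by rw [← hsum, ht]⟩
  · simp only [Fin.mk_one] at ht
    exact ⟨f 0, hf 0, by rw [← hsum, ht, add_comm]⟩

lemma int_pin {m v : ℤ} (hm : 0 < m) (hd : m ∣ v) (h1 : -(2*m) < v) (h2 : v < 2*m) :
    v = -m ∨ v = 0 ∨ v = m := by
  obtain ⟨c, rfl⟩ := hd
  have hc1 : -2 < c := by
    by_contra h
    push_neg at h
    have : m * c ≤ m * (-2) := mul_le_mul_of_nonneg_left h hm.le
    linarith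
  have hc2 : c < 2 := by
    by_contra h
    push_neg at h
    have : m * 2 ≤ m * c := mul_le_mul_of_nonneg_left h hm.le
    linarith
  interval_cases c <;> omega

lemma zmod_dvd {k i j N : ℕ} (h : (j : ZMod (4*k-1)) - (i : ZMod (4*k-1)) = (N : ZMod (4*k-1))) :
    ((4*k-1 : ℕ) : ℤ) ∣ ((i : ℤ) + N - j) := by
  have h2 : ((j : ℕ) : ZMod (4*k-1)) = ((i + N : ℕ) : ZMod (4*k-1)) := by
    push_cast
    linear_combination h
  have h3 := (ZMod.natCast_eq_natCast_iff _ _ _).mp h2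
  have h4 := h3.dvd
  push_cast at h4 ⊢
  exact h4

lemma cast_pin {k i j N : ℕ} (hk : 2 ≤ k) (hi1 : k ≤ i) (hi2 : i ≤ 3*k-1)
    (hj1 : k ≤ j) (hj2 : j ≤ 3*k-1) (hN : N ≤ 4*k)
    (h : (j : ZMod (4*k-1)) - (i : ZMod (4*k-1)) = (N : ZMod (4*k-1))) :
    (i : ℤ) + N - j = -(4*(k:ℤ)-1) ∨ (i : ℤ) + N - j = 0 ∨ (i : ℤ) + N - j = 4*(k:ℤ)-1 := by
  have hd := zmod_dvd h
  have hm : ((4*k-1 : ℕ) : ℤ) = 4*(k:ℤ)-1 := by omega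
  rw [hm] at hd
  exact int_pin (by omega) hd (by omega) (by omega)

end A

section B
variable {G : Type*}

lemma rows_lt [AddCommGroup G] {H : Set G} {p q : G × ℤ} (h : CayleyLE H p q) (hne : p ≠ q) :
    p.2 < q.2 := by
  rcases lt_or_eq_of_le h.1 with h' | h'
  · exact h'
  · exfalso
    have h0 : (q.2 - p.2).toNat = 0 := by omega
    have h2 := h.2
    rw [h0] at h2
    have h3 := isSumOf_zero' h2
    exact hne (Prod.ext (sub_eq_zero.mp h3).symm h')

lemma step1_char {k i j : ℕ} (hk : 2 ≤ k) (hi1 : k ≤ i) (hi2 : i ≤ 3*k-1)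
    (hj1 : k ≤ j) (hj2 : j ≤ 3*k-1)
    (h : IsSumOf {((2*k-1 : ℕ) : ZMod (4*k-1)), ((2*k : ℕ) : ZMod (4*k-1))} 1
      ((j : ZMod (4*k-1)) - (i : ZMod (4*k-1)))) :
    (i = k ∧ j = 3*k-1) ∨ (i = 3*k-1 ∧ j = k) := by
  obtain ⟨s, hs, hx⟩ := isSumOf_pair h
  interval_cases s
  · simp only [zero_nsmul, zero_add, Nat.sub_zero, one_nsmul] at hx
    have v := cast_pin hk hi1 hi2 hj1 hj2 (by omega) hx
    omega
  · simp only [one_nsmul, Nat.sub_self, zero_nsmul, add_zero] at hx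
    have v := cast_pin hk hi1 hi2 hj1 hj2 (by omega) hx
    omega

lemma no34 {k i j : ℕ} (hk : 2 ≤ k) {p q : ZMod (4*k-1) × ℤ}
    (hi1 : k ≤ i) (hi2 : i ≤ 3*k-1) (hj1 : k+2 ≤ j) (hj2 : j ≤ 3*k-3)
    (hp1 : p.1 = (i : ZMod (4*k-1))) (hq1 : q.1 = (j : ZMod (4*k-1)))
    (hp2 : p.2 = 3) (hq2 : q.2 = 4)
    (hle : CayleyLE {((2*k-1 : ℕ) : ZMod (4*k-1)), ((2*k : ℕ) : ZMod (4*k-1))} p q) : False := by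
  have h2 := hle.2
  rw [show (q.2 - p.2).toNat = 1 by omega, hp1, hq1] at h2
  have := step1_char hk hi1 hi2 (by omega) (by omega) h2
  omega

lemma up_unique {k i j j' : ℕ} (hk : 2 ≤ k) {p q q' : ZMod (4*k-1) × ℤ}
    (hi1 : k ≤ i) (hi2 : i ≤ 3*k-1) (hj1 : k ≤ j) (hj2 : j ≤ 3*k-1)
    (hj1' : k ≤ j') (hj2' : j' ≤ 3*k-1)
    (hp1 : p.1 = (i : ZMod (4*k-1))) (hq1 : q.1 = (j : ZMod (4*k-1)))
    (hq1' : q'.1 = (j' : ZMod (4*k-1)))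
    (hp2 : p.2 = 1) (hq2 : q.2 = 2) (hq2' : q'.2 = 2)
    (hle : CayleyLE {((2*k-1 : ℕ) : ZMod (4*k-1)), ((2*k : ℕ) : ZMod (4*k-1))} p q)
    (hle' : CayleyLE {((2*k-1 : ℕ) : ZMod (4*k-1)), ((2*k : ℕ) : ZMod (4*k-1))} p q') :
    q = q' := by
  have h2 := hle.2
  rw [show (q.2 - p.2).toNat = 1 by omega, hp1, hq1] at h2
  have h2' := hle'.2
  rw [show (q'.2 - p.2).toNat = 1 by omega, hp1, hq1'] at h2'
  have s1 := step1_char hk hi1 hi2 hj1 hj2 h2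
  have s2 := step1_char hk hi1 hi2 hj1' hj2' h2'
  have hjj : j = j' := by omega
  subst hjj
  exact Prod.ext (by rw [hq1, hq1']) (by omega)

lemma chain123 {k ix iy iz : ℕ} (hk : 2 ≤ k) {x y z : ZMod (4*k-1) × ℤ}
    (lxa : k ≤ ix) (lxb : ix ≤ 3*k-1) (lya : k ≤ iy) (lyb : iy ≤ 3*k-1)
    (lza : k ≤ iz) (lzb : iz ≤ 3*k-1)
    (cx : x.1 = (ix : ZMod (4*k-1))) (cy : y.1 = (iy : ZMod (4*k-1)))
    (cz : z.1 = (iz : ZMod (4*k-1)))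
    (hrx : x.2 = 1) (hry : y.2 = 2) (hrz : z.2 = 3)
    {η : ZMod (4*k-1)}
    (hη : η = ((2*k-1 : ℕ) : ZMod (4*k-1)) ∨ η = ((2*k : ℕ) : ZMod (4*k-1)))
    (w1 : IsSumOfWith {((2*k-1 : ℕ) : ZMod (4*k-1)), ((2*k : ℕ) : ZMod (4*k-1))}
      ((y.2 - x.2).toNat) η (y.1 - x.1))
    (w2 : IsSumOfWith {((2*k-1 : ℕ) : ZMod (4*k-1)), ((2*k : ℕ) : ZMod (4*k-1))}
      ((z.2 - y.2).toNat) η (z.1 - y.1)) : False := by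
  rw [show (y.2 - x.2).toNat = 1 by omega] at w1
  rw [show (z.2 - y.2).toNat = 1 by omega] at w2
  have e1 := isSumOfWith_one w1
  have e2 := isSumOfWith_one w2
  rw [cx, cy] at e1
  rw [cy, cz] at e2
  rcases hη with rfl | rfl
  · have v1 := cast_pin hk lxa lxb lya lyb (by omega) e1
    have v2 := cast_pin hk lya lyb lza lzb (by omega) e2
    omega
  · have v1 := cast_pin hk lxa lxb lya lyb (by omega) e1
    have v2 := cast_pin hk lya lyb lza lzb (by omega) e2
    omega

lemma chain124 {k ix iy iz : ℕ} (hk : 2 ≤ k) {x y z : ZMod (4*k-1) × ℤ}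
    (lxa : k ≤ ix) (lxb : ix ≤ 3*k-1) (lya : k ≤ iy) (lyb : iy ≤ 3*k-1)
    (lza : k+2 ≤ iz) (lzb : iz ≤ 3*k-3)
    (cx : x.1 = (ix : ZMod (4*k-1))) (cy : y.1 = (iy : ZMod (4*k-1)))
    (cz : z.1 = (iz : ZMod (4*k-1)))
    (hrx : x.2 = 1) (hry : y.2 = 2) (hrz : z.2 = 4)
    {η : ZMod (4*k-1)}
    (hη : η = ((2*k-1 : ℕ) : ZMod (4*k-1)) ∨ η = ((2*k : ℕ) : ZMod (4*k-1)))
    (w1 : IsSumOfWith {((2*k-1 : ℕ) : ZMod (4*k-1)), ((2*k : ℕ) : ZMod (4*k-1))}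
      ((y.2 - x.2).toNat) η (y.1 - x.1))
    (w2 : IsSumOfWith {((2*k-1 : ℕ) : ZMod (4*k-1)), ((2*k : ℕ) : ZMod (4*k-1))}
      ((z.2 - y.2).toNat) η (z.1 - y.1)) : False := by
  rw [show (y.2 - x.2).toNat = 1 by omega] at w1
  rw [show (z.2 - y.2).toNat = 2 by omega] at w2
  have e1 := isSumOfWith_one w1
  obtain ⟨c, hc, e2⟩ := isSumOfWith_two w2
  simp only [Set.mem_insert_iff, Set.mem_singleton_iff] at hc
  rw [cx, cy] at e1
  rw [cy, cz] at e2
  rcases hη with rfl | rfl <;> rcases hc with rfl | rfl <;>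
    (rw [← Nat.cast_add] at e2;
     have v1 := cast_pin hk lxa lxb lya lyb (by omega) e1;
     have v2 := cast_pin hk lya lyb (by omega : k ≤ iz) (by omega : iz ≤ 3*k-1) (by omega) e2;
     omega)

end B

section DFAux

lemma memP_char {k : ℕ} (hk : 2 ≤ k) {p : ZMod (4 * k - 1) × ℤ}
    (hp : (p.2 = 4 ∧ ∃ i : ℕ, k + 2 ≤ i ∧ i ≤ 3 * k - 3 ∧ p.1 = (i : ZMod (4 * k - 1))) ∨
        ((p.2 = 1 ∨ p.2 = 2 ∨ p.2 = 3) ∧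
          ∃ i : ℕ, k ≤ i ∧ i ≤ 3 * k - 1 ∧ p.1 = (i : ZMod (4 * k - 1)))) :
    ∃ i : ℕ, k ≤ i ∧ i ≤ 3*k-1 ∧ p.1 = (i : ZMod (4*k-1)) ∧
      (p.2 = 1 ∨ p.2 = 2 ∨ p.2 = 3 ∨ (p.2 = 4 ∧ k+2 ≤ i ∧ i ≤ 3*k-3)) := by
  rcases hp with ⟨h4, i, h1, h2, h3⟩ | ⟨hr, i, h1, h2, h3⟩
  · exact ⟨i, by omega, by omega, h3, Or.inr (Or.inr (Or.inr ⟨h4, h1, h2⟩))⟩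
  · exact ⟨i, h1, h2, h3, by tauto⟩

end DFAux

/-- for `k ≥ 2`, `m = 4k - 1`, `H = {2k-1, 2k}` in `ℤ/mℤ`, the Cayley poset
consisting of `(i,4)` for `i = k+2, ..., 3k-3` and `(i,j)` for `i = k, ..., 3k-1`,
`j = 1,2,3`, has `2m - 2` elements and is strongly diamond-free. -/
theorem example4 (k : ℕ) (hk : 2 ≤ k) :
    ({p : ZMod (4 * k - 1) × ℤ |
        (p.2 = 4 ∧ ∃ i : ℕ, k + 2 ≤ i ∧ i ≤ 3 * k - 3 ∧ p.1 = (i : ZMod (4 * k - 1))) ∨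
        ((p.2 = 1 ∨ p.2 = 2 ∨ p.2 = 3) ∧
          ∃ i : ℕ, k ≤ i ∧ i ≤ 3 * k - 1 ∧ p.1 = (i : ZMod (4 * k - 1)))}).ncard
      = 2 * (4 * k - 1) - 2 ∧
    StronglyDiamondFree
      ({((2 * k - 1 : ℕ) : ZMod (4 * k - 1)), ((2 * k : ℕ) : ZMod (4 * k - 1))} :
        Set (ZMod (4 * k - 1)))
      {p : ZMod (4 * k - 1) × ℤ |
        (p.2 = 4 ∧ ∃ i : ℕ, k + 2 ≤ i ∧ i ≤ 3 * k - 3 ∧ p.1 = (i : ZMod (4 * k - 1))) ∨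
        ((p.2 = 1 ∨ p.2 = 2 ∨ p.2 = 3) ∧
          ∃ i : ℕ, k ≤ i ∧ i ≤ 3 * k - 1 ∧ p.1 = (i : ZMod (4 * k - 1)))} := by
  haveI : NeZero (4 * k - 1) := ⟨by omega⟩
  classical
  constructor
  · -- counting
    set F : Finset (ZMod (4 * k - 1) × ℤ) :=
      (((Finset.Icc (k+2) (3*k-3)) ×ˢ ({4} : Finset ℤ)) ∪
        ((Finset.Icc k (3*k-1)) ×ˢ ({1,2,3} : Finset ℤ))).image
        (fun q : ℕ × ℤ => ((q.1 : ZMod (4 * k - 1)), q.2)) with hF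
    have hS : {p : ZMod (4 * k - 1) × ℤ |
          (p.2 = 4 ∧ ∃ i : ℕ, k + 2 ≤ i ∧ i ≤ 3 * k - 3 ∧ p.1 = (i : ZMod (4 * k - 1))) ∨
          ((p.2 = 1 ∨ p.2 = 2 ∨ p.2 = 3) ∧
            ∃ i : ℕ, k ≤ i ∧ i ≤ 3 * k - 1 ∧ p.1 = (i : ZMod (4 * k - 1)))} = ↑F := by
      ext ⟨a, b⟩
      simp only [hF, Set.mem_setOf_eq, Finset.coe_image, Set.mem_image, Finset.mem_coe,
        Finset.mem_union, Finset.mem_product, Finset.mem_Icc, Finset.mem_insert,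
        Finset.mem_singleton, Prod.exists, Prod.mk.injEq]
      constructor
      · rintro (⟨hb, i, h1, h2, h3⟩ | ⟨hb, i, h1, h2, h3⟩)
        · exact ⟨i, 4, Or.inl ⟨⟨h1, h2⟩, rfl⟩, h3.symm, hb.symm⟩
        · exact ⟨i, b, Or.inr ⟨⟨h1, h2⟩, by tauto⟩, h3.symm, rfl⟩
      · rintro ⟨i, c, (⟨⟨h1, h2⟩, hc⟩ | ⟨⟨h1, h2⟩, hc⟩), ha, hb⟩
        · exact Or.inl ⟨by omega, i, h1, h2, ha.symm⟩
        · exact Or.inr ⟨by omega, i, h1, h2, ha.symm⟩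
    rw [hS, Set.ncard_coe_finset]
    have hdisj : Disjoint ((Finset.Icc (k+2) (3*k-3)) ×ˢ ({4} : Finset ℤ))
        ((Finset.Icc k (3*k-1)) ×ˢ ({1,2,3} : Finset ℤ)) := by
      simp only [Finset.disjoint_left, Finset.mem_product, Finset.mem_singleton,
        Finset.mem_insert, Finset.mem_Icc]
      rintro ⟨a, b⟩ ⟨-, rfl⟩ ⟨-, h⟩
      norm_num at h
    have hinj : Set.InjOn (fun q : ℕ × ℤ => ((q.1 : ZMod (4 * k - 1)), q.2))
        ↑(((Finset.Icc (k+2) (3*k-3)) ×ˢ ({4} : Finset ℤ)) ∪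
          ((Finset.Icc k (3*k-1)) ×ˢ ({1,2,3} : Finset ℤ))) := by
      intro q hq q' hq' h
      simp only [Finset.coe_union, Set.mem_union, Finset.coe_product, Set.mem_prod,
        Finset.mem_coe, Finset.mem_Icc, Finset.mem_singleton, Finset.mem_insert] at hq hq'
      simp only [Prod.mk.injEq] at h
      obtain ⟨h1, h2⟩ := h
      have hv : q.1 = q'.1 := by
        have e1 := congrArg ZMod.val h1
        rcases hq with ⟨⟨_, _⟩, _⟩ | ⟨⟨_, _⟩, _⟩ <;> rcases hq' with ⟨⟨_, _⟩, _⟩ | ⟨⟨_, _⟩, _⟩ <;>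
          rwa [ZMod.val_natCast_of_lt (by omega), ZMod.val_natCast_of_lt (by omega)] at e1
      exact Prod.ext hv h2
    rw [hF, Finset.card_image_of_injOn hinj, Finset.card_union_of_disjoint hdisj,
      Finset.card_product, Finset.card_product, Nat.card_Icc, Nat.card_Icc]
    have c1 : ({4} : Finset ℤ).card = 1 := rfl
    have c2 : ({1,2,3} : Finset ℤ).card = 3 := rfl
    rw [c1, c2]
    omega
  · constructor
    · rintro ⟨p₁, hp₁, p₂, hp₂, p₃, hp₃, p₄, hp₄, h12, h13, h14, h23, h24, h34,
        le12, le13, le24, le34⟩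
      obtain ⟨i₁, l1a, l1b, c1, r1⟩ := memP_char hk hp₁
      obtain ⟨i₂, l2a, l2b, c2, r2⟩ := memP_char hk hp₂
      obtain ⟨i₃, l3a, l3b, c3, r3⟩ := memP_char hk hp₃
      obtain ⟨i₄, l4a, l4b, c4, r4⟩ := memP_char hk hp₄
      have o12 := rows_lt le12 h12
      have o13 := rows_lt le13 h13
      have o24 := rows_lt le24 h24
      have o34 := rows_lt le34 h34
      rcases r1 with hr1 | hr1 | hr1 | ⟨hr1, hb1a, hb1b⟩ <;>
        rcases r2 with hr2 | hr2 | hr2 | ⟨hr2, hb2a, hb2b⟩ <;>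
          rcases r3 with hr3 | hr3 | hr3 | ⟨hr3, hb3a, hb3b⟩ <;>
            rcases r4 with hr4 | hr4 | hr4 | ⟨hr4, hb4a, hb4b⟩ <;>
              first
                | omega
                | exact no34 hk l2a l2b hb4a hb4b c2 c4 hr2 hr4 le24
                | exact no34 hk l3a l3b hb4a hb4b c3 c4 hr3 hr4 le34
                | exact h23 (up_unique hk l1a l1b l2a l2b l3a l3b c1 c2 c3 hr1 hr2 hr3 le12 le13)
    · rintro ⟨x, hx, y, hy, z, hz, ⟨lexy, nexy⟩, ⟨leyz, neyz⟩, η, hη, w1, w2⟩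
      obtain ⟨ix, lxa, lxb, cx, rx⟩ := memP_char hk hx
      obtain ⟨iy, lya, lyb, cy, ry⟩ := memP_char hk hy
      obtain ⟨iz, lza, lzb, cz, rz⟩ := memP_char hk hz
      have oxy := rows_lt lexy nexy
      have oyz := rows_lt leyz neyz
      simp only [Set.mem_insert_iff, Set.mem_singleton_iff] at hη
      rcases rx with hrx | hrx | hrx | ⟨hrx, hbxa, hbxb⟩ <;>
        rcases ry with hry | hry | hry | ⟨hry, hbya, hbyb⟩ <;>
          rcases rz with hrz | hrz | hrz | ⟨hrz, hbza, hbzb⟩ <;>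
            first
              | omega
              | exact no34 hk lya lyb hbza hbzb cy cz hry hrz leyz
              | exact chain123 hk lxa lxb lya lyb lza lzb cx cy cz hrx hry hrz hη w1 w2
              | exact chain124 hk lxa lxb lya lyb hbza hbzb cx cy cz hrx hry hrz hη w1 w2
end

section
/- Let k ≥ 2, m = 4k + 1, Γ = ℤ/mℤ, and H = {2k, 2k+1}. The Cayley poset Π consisting of (i, 4) for i = k+2, ..., 3k−2 and (i, j) for i = k, k+1, ..., 3k and j = 1, 2, 3, has 2m − 2 elements and is strongly diamond-free. -/
open Finset

variable {Γ : Type*}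

lemma ex5_key (k a b : ℕ) (h : (a : ZMod (4*k+1)) = (b : ZMod (4*k+1)))
    (h1 : a < b + 2*(4*k+1)) (h2 : b < a + 2*(4*k+1)) :
    a = b ∨ a + (4*k+1) = b ∨ b + (4*k+1) = a := by
  have hmod := (ZMod.natCast_eq_natCast_iff _ _ _).mp h
  have hd : ((4*k+1 : ℕ) : ℤ) ∣ (b : ℤ) - a := hmod.dvd
  obtain ⟨t, ht⟩ := hd
  have hm : (0:ℤ) < ((4*k+1 : ℕ) : ℤ) := by positivity
  have ht2 : t < 2 := by
    by_contra hc
    push_neg at hc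
    have : ((4*k+1:ℕ):ℤ) * 2 ≤ ((4*k+1:ℕ):ℤ) * t := mul_le_mul_of_nonneg_left hc hm.le
    have hb : (b:ℤ) < (a:ℤ) + 2*(4*k+1) := by exact_mod_cast h2
    push_cast at this ht hb ⊢
    linarith
  have ht1 : -2 < t := by
    by_contra hc
    push_neg at hc
    have : ((4*k+1:ℕ):ℤ) * t ≤ ((4*k+1:ℕ):ℤ) * (-2) := mul_le_mul_of_nonneg_left hc hm.le
    have ha : (a:ℤ) < (b:ℤ) + 2*(4*k+1) := by exact_mod_cast h1
    push_cast at this ht ha ⊢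
    linarith
  interval_cases t <;> (push_cast at ht; omega)

lemma ex5_sum_zero [AddCommMonoid Γ] (H : Set Γ) (x : Γ) (h : IsSumOf H 0 x) : x = 0 := by
  obtain ⟨f, -, hs⟩ := h
  simpa using hs.symm

lemma ex5_with_one [AddCommMonoid Γ] (H : Set Γ) (η x : Γ)
    (h : IsSumOfWith H 1 η x) : η = x := by
  obtain ⟨f, -, ⟨t, ht⟩, hs⟩ := h
  have h0 : t = 0 := Subsingleton.elim t 0
  subst h0
  rw [← ht]
  rw [Fin.sum_univ_one] at hs
  exact hs.symm ▸ rfl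

lemma ex5_sum_char (k n : ℕ) (x : ZMod (4*k+1))
    (h : IsSumOf ({((2*k:ℕ):ZMod (4*k+1)), ((2*k+1:ℕ):ZMod (4*k+1))} : Set (ZMod (4*k+1))) n x) :
    ∃ s, s ≤ n ∧ x = ((2*k*n + s : ℕ) : ZMod (4*k+1)) := by
  classical
  obtain ⟨f, hf, rfl⟩ := h
  refine ⟨(Finset.univ.filter fun t => f t = ((2*k+1:ℕ):ZMod (4*k+1))).card, ?_, ?_⟩
  · simpa using Finset.card_filter_le Finset.univ (fun t => f t = ((2*k+1:ℕ):ZMod (4*k+1)))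
  · have hft : ∀ t, f t = ((2*k:ℕ):ZMod (4*k+1)) +
        (if f t = ((2*k+1:ℕ):ZMod (4*k+1)) then 1 else 0) := by
      intro t
      by_cases hc : f t = ((2*k+1:ℕ):ZMod (4*k+1))
      · rw [if_pos hc, hc]; push_cast; ring
      · rw [if_neg hc]
        have := hf t
        simp only [Set.mem_insert_iff, Set.mem_singleton_iff] at this
        rcases this with h' | h'
        · simpa using h'
        · exact absurd h' hc
    rw [Finset.sum_congr rfl (fun t _ => hft t), Finset.sum_add_distrib,
      Finset.sum_const, Finset.sum_boole, Finset.card_univ, Fintype.card_fin]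
    push_cast
    rw [nsmul_eq_mul]
    ring

lemma ex5_LGen (k n a b : ℕ) (hk : 2 ≤ k) (ha : a ≤ 3*k) (hb : b ≤ 3*k) (hn : n ≤ 2)
    (h : IsSumOf ({((2*k:ℕ):ZMod (4*k+1)), ((2*k+1:ℕ):ZMod (4*k+1))} : Set (ZMod (4*k+1))) n
      ((b : ZMod (4*k+1)) - (a : ZMod (4*k+1)))) :
    ∃ s, s ≤ n ∧ (b = a + (2*k*n + s) ∨ b + (4*k+1) = a + (2*k*n + s) ∨
      a + (2*k*n + s) + (4*k+1) = b) := by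
  obtain ⟨s, hs, he⟩ := ex5_sum_char k n _ h
  have hcast : (b : ZMod (4*k+1)) = ((a + (2*k*n + s) : ℕ) : ZMod (4*k+1)) := by
    push_cast at he ⊢
    linear_combination he
  have hkn : 2*k*n ≤ 2*k*2 := Nat.mul_le_mul_left _ hn
  have := ex5_key k b (a + (2*k*n + s)) hcast (by omega) (by omega)
  exact ⟨s, hs, this⟩

lemma ex5_lt (k : ℕ) (p q : ZMod (4*k+1) × ℤ)
    (hle : CayleyLE ({((2*k:ℕ):ZMod (4*k+1)), ((2*k+1:ℕ):ZMod (4*k+1))} : Set (ZMod (4*k+1))) p q)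
    (hne : p ≠ q) : p.2 < q.2 := by
  rcases lt_or_eq_of_le hle.1 with h | h
  · exact h
  · exfalso
    have h0 := hle.2
    rw [show (q.2 - p.2).toNat = 0 by omega] at h0
    have := ex5_sum_zero _ _ h0
    exact hne (Prod.ext_iff.mpr ⟨by linear_combination -this, h⟩)

lemma ex5_pred1 (k a b : ℕ) (hk : 2 ≤ k) (ha : k ≤ a) (ha' : a ≤ 3*k) (hb : k ≤ b) (hb' : b ≤ 3*k)
    (h : IsSumOf ({((2*k:ℕ):ZMod (4*k+1)), ((2*k+1:ℕ):ZMod (4*k+1))} : Set (ZMod (4*k+1))) 1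
      ((b : ZMod (4*k+1)) - (a : ZMod (4*k+1)))) :
    (a = k ∧ b = 3*k) ∨ (a = 3*k ∧ b = k) := by
  obtain ⟨s, hs, hd⟩ := ex5_LGen k 1 a b hk ha' hb' (by omega) h
  omega

lemma ex5_no34 (k a b : ℕ) (hk : 2 ≤ k) (ha : k ≤ a) (ha' : a ≤ 3*k)
    (hb : k+2 ≤ b) (hb' : b ≤ 3*k-2)
    (h : IsSumOf ({((2*k:ℕ):ZMod (4*k+1)), ((2*k+1:ℕ):ZMod (4*k+1))} : Set (ZMod (4*k+1))) 1
      ((b : ZMod (4*k+1)) - (a : ZMod (4*k+1)))) : False := by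
  obtain ⟨s, hs, hd⟩ := ex5_LGen k 1 a b hk ha' (by omega) (by omega) h
  omega

lemma ex5_no24 (k a b : ℕ) (hk : 2 ≤ k) (ha : a = k ∨ a = 3*k)
    (hb : k+2 ≤ b) (hb' : b ≤ 3*k-2)
    (h : IsSumOf ({((2*k:ℕ):ZMod (4*k+1)), ((2*k+1:ℕ):ZMod (4*k+1))} : Set (ZMod (4*k+1))) 2
      ((b : ZMod (4*k+1)) - (a : ZMod (4*k+1)))) : False := by
  obtain ⟨s, hs, hd⟩ := ex5_LGen k 2 a b hk (by omega) (by omega) (by omega) h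
  omega

lemma ex5_memP (k : ℕ) (hk : 2 ≤ k) (p : ZMod (4*k+1) × ℤ)
    (hp : p ∈ {p : ZMod (4 * k + 1) × ℤ |
        (p.2 = 4 ∧ ∃ i : ℕ, k + 2 ≤ i ∧ i ≤ 3 * k - 2 ∧ p.1 = (i : ZMod (4 * k + 1))) ∨
        ((p.2 = 1 ∨ p.2 = 2 ∨ p.2 = 3) ∧
          ∃ i : ℕ, k ≤ i ∧ i ≤ 3 * k ∧ p.1 = (i : ZMod (4 * k + 1)))}) :
    ∃ a : ℕ, p.1 = (a : ZMod (4*k+1)) ∧ k ≤ a ∧ a ≤ 3*k ∧ 1 ≤ p.2 ∧ p.2 ≤ 4 ∧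
      (p.2 = 4 → k+2 ≤ a ∧ a ≤ 3*k-2) := by
  simp only [Set.mem_setOf_eq] at hp
  rcases hp with ⟨h4, i, h1, h2, h3⟩ | ⟨hj, i, h1, h2, h3⟩
  · exact ⟨i, h3, by omega, by omega, by omega, by omega, fun _ => ⟨h1, h2⟩⟩
  · refine ⟨i, h3, h1, h2, by rcases hj with h | h | h <;> omega,
      by rcases hj with h | h | h <;> omega, fun h4 => by rcases hj with h | h | h <;> omega⟩

/-- for `k ≥ 2`, `m = 4k + 1`, `H = {2k, 2k+1}` in `ℤ/mℤ`, the Cayley poset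
consisting of `(i,4)` for `i = k+2, ..., 3k-2` and `(i,j)` for `i = k, ..., 3k`,
`j = 1,2,3`, has `2m - 2` elements and is strongly diamond-free. -/
theorem example5 (k : ℕ) (hk : 2 ≤ k) :
    ({p : ZMod (4 * k + 1) × ℤ |
        (p.2 = 4 ∧ ∃ i : ℕ, k + 2 ≤ i ∧ i ≤ 3 * k - 2 ∧ p.1 = (i : ZMod (4 * k + 1))) ∨
        ((p.2 = 1 ∨ p.2 = 2 ∨ p.2 = 3) ∧
          ∃ i : ℕ, k ≤ i ∧ i ≤ 3 * k ∧ p.1 = (i : ZMod (4 * k + 1)))}).ncard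
      = 2 * (4 * k + 1) - 2 ∧
    StronglyDiamondFree
      ({((2 * k : ℕ) : ZMod (4 * k + 1)), ((2 * k + 1 : ℕ) : ZMod (4 * k + 1))} :
        Set (ZMod (4 * k + 1)))
      {p : ZMod (4 * k + 1) × ℤ |
        (p.2 = 4 ∧ ∃ i : ℕ, k + 2 ≤ i ∧ i ≤ 3 * k - 2 ∧ p.1 = (i : ZMod (4 * k + 1))) ∨
        ((p.2 = 1 ∨ p.2 = 2 ∨ p.2 = 3) ∧
          ∃ i : ℕ, k ≤ i ∧ i ≤ 3 * k ∧ p.1 = (i : ZMod (4 * k + 1)))} := by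
  constructor
  · -- cardinality
    have hSF : {p : ZMod (4 * k + 1) × ℤ |
        (p.2 = 4 ∧ ∃ i : ℕ, k + 2 ≤ i ∧ i ≤ 3 * k - 2 ∧ p.1 = (i : ZMod (4 * k + 1))) ∨
        ((p.2 = 1 ∨ p.2 = 2 ∨ p.2 = 3) ∧
          ∃ i : ℕ, k ≤ i ∧ i ≤ 3 * k ∧ p.1 = (i : ZMod (4 * k + 1)))} =
      ↑(((Finset.Icc (k+2) (3*k-2)).image (fun i : ℕ => (((i : ℕ) : ZMod (4*k+1)), (4:ℤ)))) ∪
        ((Finset.Icc k (3*k)).image (fun i : ℕ => (((i : ℕ) : ZMod (4*k+1)), (1:ℤ)))) ∪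
        ((Finset.Icc k (3*k)).image (fun i : ℕ => (((i : ℕ) : ZMod (4*k+1)), (2:ℤ)))) ∪
        ((Finset.Icc k (3*k)).image (fun i : ℕ => (((i : ℕ) : ZMod (4*k+1)), (3:ℤ))))) := by
      ext ⟨u, v⟩
      simp only [Set.mem_setOf_eq, Finset.coe_union, Set.mem_union, Finset.coe_image,
        Set.mem_image, Finset.mem_coe, Finset.mem_Icc, Prod.mk.injEq]
      constructor
      · rintro (⟨rfl, i, h1, h2, rfl⟩ | ⟨hv, i, h1, h2, rfl⟩)
        · exact Or.inl (Or.inl (Or.inl ⟨i, ⟨h1, h2⟩, rfl, rfl⟩))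
        · rcases hv with rfl | rfl | rfl
          · exact Or.inl (Or.inl (Or.inr ⟨i, ⟨h1, h2⟩, rfl, rfl⟩))
          · exact Or.inl (Or.inr ⟨i, ⟨h1, h2⟩, rfl, rfl⟩)
          · exact Or.inr ⟨i, ⟨h1, h2⟩, rfl, rfl⟩
      · rintro (((⟨i, ⟨h1, h2⟩, rfl, rfl⟩ | ⟨i, ⟨h1, h2⟩, rfl, rfl⟩) |
          ⟨i, ⟨h1, h2⟩, rfl, rfl⟩) | ⟨i, ⟨h1, h2⟩, rfl, rfl⟩)
        · exact Or.inl ⟨rfl, i, h1, h2, rfl⟩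
        · exact Or.inr ⟨Or.inl rfl, i, h1, h2, rfl⟩
        · exact Or.inr ⟨Or.inr (Or.inl rfl), i, h1, h2, rfl⟩
        · exact Or.inr ⟨Or.inr (Or.inr rfl), i, h1, h2, rfl⟩
    rw [hSF, Set.ncard_coe_finset]
    have hinj : ∀ (lo hi : ℕ) (j : ℤ), hi ≤ 3*k →
        Set.InjOn (fun i : ℕ => (((i : ℕ) : ZMod (4*k+1)), j)) ↑(Finset.Icc lo hi) := by
      intro lo hi j hhi u hu w hw h
      simp only [Finset.coe_Icc, Set.mem_Icc] at hu hw
      have h1 : ((u : ℕ) : ZMod (4*k+1)) = ((w : ℕ) : ZMod (4*k+1)) := (Prod.ext_iff.mp h).1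
      have := ex5_key k u w h1 (by omega) (by omega)
      omega
    have hd : ∀ (s t : Finset ℕ) (j j' : ℤ), j ≠ j' →
        Disjoint (s.image fun i : ℕ => (((i : ℕ) : ZMod (4*k+1)), j))
                 (t.image fun i : ℕ => (((i : ℕ) : ZMod (4*k+1)), j')) := by
      intro s t j j' hjj'
      rw [Finset.disjoint_left]
      rintro p hp hq
      simp only [Finset.mem_image] at hp hq
      obtain ⟨i, -, rfl⟩ := hp
      obtain ⟨i', -, h⟩ := hq
      exact hjj' ((Prod.ext_iff.mp h).2).symm
    rw [Finset.card_union_of_disjoint (Finset.disjoint_union_left.mpr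
        ⟨Finset.disjoint_union_left.mpr ⟨hd _ _ _ _ (by norm_num), hd _ _ _ _ (by norm_num)⟩,
          hd _ _ _ _ (by norm_num)⟩),
      Finset.card_union_of_disjoint (Finset.disjoint_union_left.mpr
        ⟨hd _ _ _ _ (by norm_num), hd _ _ _ _ (by norm_num)⟩),
      Finset.card_union_of_disjoint (hd _ _ _ _ (by norm_num)),
      Finset.card_image_of_injOn (hinj _ _ _ (by omega)),
      Finset.card_image_of_injOn (hinj _ _ _ (by omega)),
      Finset.card_image_of_injOn (hinj _ _ _ (by omega)),
      Finset.card_image_of_injOn (hinj _ _ _ (by omega)),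
      Nat.card_Icc, Nat.card_Icc]
    omega
  constructor
  · -- no diamond
    rintro ⟨p₁, hp₁, p₂, hp₂, p₃, hp₃, p₄, hp₄, hne12, hne13, hne14, hne23, hne24, hne34,
      hA, hB, hC, hD⟩
    obtain ⟨a₁, hc1, hb1l, hb1u, hl1l, hl1u, h41⟩ := ex5_memP k hk p₁ hp₁
    obtain ⟨a₂, hc2, hb2l, hb2u, hl2l, hl2u, h42⟩ := ex5_memP k hk p₂ hp₂
    obtain ⟨a₃, hc3, hb3l, hb3u, hl3l, hl3u, h43⟩ := ex5_memP k hk p₃ hp₃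
    obtain ⟨a₄, hc4, hb4l, hb4u, hl4l, hl4u, h44⟩ := ex5_memP k hk p₄ hp₄
    have l12 := ex5_lt k p₁ p₂ hA hne12
    have l13 := ex5_lt k p₁ p₃ hB hne13
    have l24 := ex5_lt k p₂ p₄ hC hne24
    have l34 := ex5_lt k p₃ p₄ hD hne34
    have excl2 : ¬(p₂.2 = 3 ∧ p₄.2 = 4) := by
      rintro ⟨h3, h4⟩
      obtain ⟨hb4l', hb4u'⟩ := h44 h4
      have hs : IsSumOf ({((2*k:ℕ):ZMod (4*k+1)), ((2*k+1:ℕ):ZMod (4*k+1))} : Set (ZMod (4*k+1))) 1 ((a₄ : ZMod (4*k+1)) - (a₂ : ZMod (4*k+1))) := by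
        have := hC.2
        rwa [hc4, hc2, show (p₄.2 - p₂.2).toNat = 1 by omega] at this
      exact ex5_no34 k a₂ a₄ hk hb2l hb2u hb4l' hb4u' hs
    have excl3 : ¬(p₃.2 = 3 ∧ p₄.2 = 4) := by
      rintro ⟨h3, h4⟩
      obtain ⟨hb4l', hb4u'⟩ := h44 h4
      have hs : IsSumOf ({((2*k:ℕ):ZMod (4*k+1)), ((2*k+1:ℕ):ZMod (4*k+1))} : Set (ZMod (4*k+1))) 1 ((a₄ : ZMod (4*k+1)) - (a₃ : ZMod (4*k+1))) := by
        have := hD.2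
        rwa [hc4, hc3, show (p₄.2 - p₃.2).toNat = 1 by omega] at this
      exact ex5_no34 k a₃ a₄ hk hb3l hb3u hb4l' hb4u' hs
    have hlv : p₂.2 = 2 ∧ p₃.2 = 2 ∧ p₁.2 = 1 := by omega
    obtain ⟨e2, e3, e1⟩ := hlv
    have hr12 : IsSumOf ({((2*k:ℕ):ZMod (4*k+1)), ((2*k+1:ℕ):ZMod (4*k+1))} : Set (ZMod (4*k+1))) 1 ((a₂ : ZMod (4*k+1)) - (a₁ : ZMod (4*k+1))) := by
      have := hA.2
      rwa [hc2, hc1, show (p₂.2 - p₁.2).toNat = 1 by omega] at this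
    have hr13 : IsSumOf ({((2*k:ℕ):ZMod (4*k+1)), ((2*k+1:ℕ):ZMod (4*k+1))} : Set (ZMod (4*k+1))) 1 ((a₃ : ZMod (4*k+1)) - (a₁ : ZMod (4*k+1))) := by
      have := hB.2
      rwa [hc3, hc1, show (p₃.2 - p₁.2).toNat = 1 by omega] at this
    have hp12 := ex5_pred1 k a₁ a₂ hk hb1l hb1u hb2l hb2u hr12
    have hp13 := ex5_pred1 k a₁ a₃ hk hb1l hb1u hb3l hb3u hr13
    have ha23 : a₂ = a₃ := by omega
    exact hne23 (Prod.ext_iff.mpr ⟨by rw [hc2, hc3, ha23], by omega⟩)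
  · -- no strong chain
    rintro ⟨x, hx, y, hy, z, hz, ⟨hxy, hnexy⟩, ⟨hyz, hneyz⟩, η, hη, hw1, hw2⟩
    obtain ⟨a, hca, hal, hau, hxl, hxu, h4x⟩ := ex5_memP k hk x hx
    obtain ⟨b, hcb, hbl, hbu, hyl, hyu, h4y⟩ := ex5_memP k hk y hy
    obtain ⟨c, hcc, hcl, hcu, hzl, hzu, h4z⟩ := ex5_memP k hk z hz
    have lxy := ex5_lt k x y hxy hnexy
    have lyz := ex5_lt k y z hyz hneyz
    have excl : ¬(y.2 = 3 ∧ z.2 = 4) := by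
      rintro ⟨h3, h4⟩
      obtain ⟨hc4l, hc4u⟩ := h4z h4
      have hs : IsSumOf ({((2*k:ℕ):ZMod (4*k+1)), ((2*k+1:ℕ):ZMod (4*k+1))} : Set (ZMod (4*k+1))) 1 ((c : ZMod (4*k+1)) - (b : ZMod (4*k+1))) := by
        have := hyz.2
        rwa [hcc, hcb, show (z.2 - y.2).toNat = 1 by omega] at this
      exact ex5_no34 k b c hk hbl hbu hc4l hc4u hs
    have hylv : y.2 = 2 ∧ x.2 = 1 ∧ (z.2 = 3 ∨ z.2 = 4) := by omega
    obtain ⟨ey, ex, ez⟩ := hylv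
    have hrxy : IsSumOf ({((2*k:ℕ):ZMod (4*k+1)), ((2*k+1:ℕ):ZMod (4*k+1))} : Set (ZMod (4*k+1))) 1 ((b : ZMod (4*k+1)) - (a : ZMod (4*k+1))) := by
      have := hxy.2
      rwa [hcb, hca, show (y.2 - x.2).toNat = 1 by omega] at this
    have hpxy := ex5_pred1 k a b hk hal hau hbl hbu hrxy
    rcases ez with ez | ez
    · -- levels (1,2,3): shared η argument
      have hryz : IsSumOf ({((2*k:ℕ):ZMod (4*k+1)), ((2*k+1:ℕ):ZMod (4*k+1))} : Set (ZMod (4*k+1))) 1 ((c : ZMod (4*k+1)) - (b : ZMod (4*k+1))) := by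
        have := hyz.2
        rwa [hcc, hcb, show (z.2 - y.2).toNat = 1 by omega] at this
      have hpyz := ex5_pred1 k b c hk hbl hbu hcl hcu hryz
      rw [show (y.2 - x.2).toNat = 1 by omega] at hw1
      rw [show (z.2 - y.2).toNat = 1 by omega] at hw2
      have hw1' := ex5_with_one _ _ _ hw1
      have hw2' := ex5_with_one _ _ _ hw2
      have h0 := hw1'.symm.trans hw2'
      rw [hca, hcb, hcc] at h0
      have he : ((b+b : ℕ) : ZMod (4*k+1)) = ((a+c : ℕ) : ZMod (4*k+1)) := by
        push_cast
        linear_combination h0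
      have := ex5_key k (b+b) (a+c) he (by omega) (by omega)
      omega
    · -- levels (1,2,4)
      obtain ⟨hc4l, hc4u⟩ := h4z ez
      have hryz : IsSumOf ({((2*k:ℕ):ZMod (4*k+1)), ((2*k+1:ℕ):ZMod (4*k+1))} : Set (ZMod (4*k+1))) 2 ((c : ZMod (4*k+1)) - (b : ZMod (4*k+1))) := by
        have := hyz.2
        rwa [hcc, hcb, show (z.2 - y.2).toNat = 2 by omega] at this
      exact ex5_no24 k b c hk (by omega) hc4l hc4u hryz
end

section
/- For even n ≥ 6, Dove's family is diamond-free: the family F of subsets of [n] consisting of (i) all sets of size n/2 − 1 not containing {1,2}; (ii) all sets of size n/2 containing exactly zero or exactly two elements of {1,2}; and (iii) all sets of size n/2 + 1 with nonempty intersection with {1,2}, contains no four sets A ⊆ B, C ⊆ D with B ≠ C and B, C incomparable. -/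
/-- Dove's family on `[n] = {1, ..., n}`: all `(n/2 - 1)`-sets not containing `{1,2}`,
all `(n/2)`-sets containing exactly zero or exactly two elements of `{1,2}`, and all
`(n/2 + 1)`-sets meeting `{1,2}`. -/
def DoveFamily (n : ℕ) : Set (Finset ℕ) :=
  {A : Finset ℕ | A ⊆ Finset.Icc 1 n ∧
    ((A.card = n / 2 - 1 ∧ ¬ ({1, 2} : Finset ℕ) ⊆ A) ∨
     (A.card = n / 2 ∧ ((A ∩ {1, 2}).card = 0 ∨ (A ∩ {1, 2}).card = 2)) ∨
     (A.card = n / 2 + 1 ∧ (A ∩ ({1, 2} : Finset ℕ)).Nonempty))}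

lemma dove_aux (k : ℕ) (hk : 3 ≤ k) (B C : Finset ℕ)
    (hcB : B.card = k) (hI : (B ∩ C).card = k - 1)
    (hC2 : (C ∩ ({1, 2} : Finset ℕ)).card = 0 ∨ (C ∩ ({1, 2} : Finset ℕ)).card = 2)
    (hnA : ¬ ({1, 2} : Finset ℕ) ⊆ B ∩ C)
    (h12B : ({1, 2} : Finset ℕ) ⊆ B) : False := by
  rcases hC2 with hC0 | hC2
  · -- 1 ∉ C, 2 ∉ C
    have hC0' : C ∩ ({1, 2} : Finset ℕ) = ∅ := Finset.card_eq_zero.mp hC0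
    have h1C : (1 : ℕ) ∉ C := by
      intro h
      have : (1 : ℕ) ∈ C ∩ ({1, 2} : Finset ℕ) := by simp [h]
      simp [hC0'] at this
    have h2C : (2 : ℕ) ∉ C := by
      intro h
      have : (2 : ℕ) ∈ C ∩ ({1, 2} : Finset ℕ) := by simp [h]
      simp [hC0'] at this
    have h1I : (1 : ℕ) ∉ B ∩ C := by simp [h1C]
    have h2I : (2 : ℕ) ∉ B ∩ C := by simp [h2C]
    have hsub : insert 1 (insert 2 (B ∩ C)) ⊆ B := by
      intro x hx
      simp only [Finset.mem_insert] at hx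
      rcases hx with rfl | rfl | hx
      · exact h12B (by simp)
      · exact h12B (by simp)
      · exact (Finset.mem_inter.mp hx).1
    have hcard := Finset.card_le_card hsub
    have h1' : (1 : ℕ) ∉ insert 2 (B ∩ C) := by simp [h1I]
    rw [Finset.card_insert_of_notMem h1', Finset.card_insert_of_notMem h2I, hI, hcB] at hcard
    omega
  · -- {1,2} ⊆ C, contradiction with hnA
    have hsub : C ∩ ({1, 2} : Finset ℕ) = ({1, 2} : Finset ℕ) := by
      apply Finset.eq_of_subset_of_card_le Finset.inter_subset_right
      rw [hC2]
      simp
    have h12C : ({1, 2} : Finset ℕ) ⊆ C := by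
      rw [← hsub]; exact Finset.inter_subset_left
    exact hnA (Finset.subset_inter h12B h12C)

/-- for even `n ≥ 6`, Dove's family is diamond-free: it contains no four
sets `A ⊆ B, C ⊆ D` with `B ≠ C` and `B, C` incomparable. -/
theorem doveFamily_diamondFree (n : ℕ) (hn : 6 ≤ n) (heven : Even n) :
    ¬ ∃ A B C D : Finset ℕ, A ∈ DoveFamily n ∧ B ∈ DoveFamily n ∧
      C ∈ DoveFamily n ∧ D ∈ DoveFamily n ∧
      A ⊆ B ∧ A ⊆ C ∧ B ⊆ D ∧ C ⊆ D ∧ B ≠ C ∧ ¬ B ⊆ C ∧ ¬ C ⊆ B := by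
  rintro ⟨A, B, C, D, hA, hB, hC, hD, hAB, hAC, hBD, hCD, hBC, hBnC, hCnB⟩
  simp only [DoveFamily, Set.mem_setOf_eq] at hA hB hC hD
  set k := n / 2 with hkdef
  have hk : 3 ≤ k := by omega
  obtain ⟨-, hA⟩ := hA
  obtain ⟨-, hB⟩ := hB
  obtain ⟨-, hC⟩ := hC
  obtain ⟨-, hD⟩ := hD
  -- card possibilities
  have cA : A.card = k - 1 ∨ A.card = k ∨ A.card = k + 1 :=
    hA.imp And.left (fun h => h.imp And.left And.left)
  have cB : B.card = k - 1 ∨ B.card = k ∨ B.card = k + 1 :=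
    hB.imp And.left (fun h => h.imp And.left And.left)
  have cC : C.card = k - 1 ∨ C.card = k ∨ C.card = k + 1 :=
    hC.imp And.left (fun h => h.imp And.left And.left)
  have cD : D.card = k - 1 ∨ D.card = k ∨ D.card = k + 1 :=
    hD.imp And.left (fun h => h.imp And.left And.left)
  -- strict inequalities
  have hABs : A.card < B.card := by
    apply Finset.card_lt_card
    refine ⟨hAB, fun h => hBnC ?_⟩
    exact fun x hx => hAC (h hx)
  have hACs : A.card < C.card := by
    apply Finset.card_lt_card
    refine ⟨hAC, fun h => hCnB ?_⟩
    exact fun x hx => hAB (h hx)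
  have hBDs : B.card < D.card := by
    apply Finset.card_lt_card
    refine ⟨hBD, fun h => hCnB ?_⟩
    exact fun x hx => h (hCD hx)
  have hCDs : C.card < D.card := by
    apply Finset.card_lt_card
    refine ⟨hCD, fun h => hBnC ?_⟩
    exact fun x hx => h (hBD hx)
  have hcA : A.card = k - 1 := by omega
  have hcB : B.card = k := by omega
  have hcC : C.card = k := by omega
  have hcD : D.card = k + 1 := by omega
  -- extract the right disjuncts
  have hA2 : ¬ ({1, 2} : Finset ℕ) ⊆ A := by
    rcases hA with ⟨_, h⟩ | ⟨h, _⟩ | ⟨h, _⟩ <;> first | exact ‹_› | omega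
  have hB2 : (B ∩ ({1, 2} : Finset ℕ)).card = 0 ∨ (B ∩ ({1, 2} : Finset ℕ)).card = 2 := by
    rcases hB with ⟨h, _⟩ | ⟨_, h⟩ | ⟨h, _⟩ <;> first | exact ‹_› | omega
  have hC2 : (C ∩ ({1, 2} : Finset ℕ)).card = 0 ∨ (C ∩ ({1, 2} : Finset ℕ)).card = 2 := by
    rcases hC with ⟨h, _⟩ | ⟨_, h⟩ | ⟨h, _⟩ <;> first | exact ‹_› | omega
  have hD2 : (D ∩ ({1, 2} : Finset ℕ)).Nonempty := by
    rcases hD with ⟨h, _⟩ | ⟨h, _⟩ | ⟨_, h⟩ <;> first | exact ‹_› | omega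
  -- D = B ∪ C and (B ∩ C).card = k - 1
  have hUI : (B ∪ C).card + (B ∩ C).card = B.card + C.card :=
    Finset.card_union_add_card_inter B C
  have hUsub : B ∪ C ⊆ D := Finset.union_subset hBD hCD
  have hUcard : (B ∪ C).card ≤ k + 1 := hcD ▸ Finset.card_le_card hUsub
  have hUlt : B.card < (B ∪ C).card := by
    apply Finset.card_lt_card
    refine ⟨Finset.subset_union_left, fun h => hCnB ?_⟩
    exact fun x hx => h (Finset.mem_union_right B hx)
  have hIcard : (B ∩ C).card = k - 1 := by omega
  have hAeq : A = B ∩ C :=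
    Finset.eq_of_subset_of_card_le (Finset.subset_inter hAB hAC) (by omega)
  have hDeq : D = B ∪ C :=
    (Finset.eq_of_subset_of_card_le hUsub (by omega)).symm
  -- pick i ∈ D ∩ {1,2}
  obtain ⟨i, hi⟩ := hD2
  have hiBC : i ∈ B ∨ i ∈ C := by
    have := (Finset.mem_inter.mp hi).1
    rw [hDeq] at this
    exact Finset.mem_union.mp this
  have hi12 : i ∈ ({1, 2} : Finset ℕ) := (Finset.mem_inter.mp hi).2
  have hnA : ¬ ({1, 2} : Finset ℕ) ⊆ B ∩ C := hAeq ▸ hA2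
  have full : ∀ X : Finset ℕ,
      (X ∩ ({1, 2} : Finset ℕ)).card = 0 ∨ (X ∩ ({1, 2} : Finset ℕ)).card = 2 →
      i ∈ X → ({1, 2} : Finset ℕ) ⊆ X := by
    intro X hX2 hiX
    have hne : (X ∩ ({1, 2} : Finset ℕ)).Nonempty := ⟨i, Finset.mem_inter.mpr ⟨hiX, hi12⟩⟩
    have h2 : (X ∩ ({1, 2} : Finset ℕ)).card = 2 := by
      rcases hX2 with h | h
      · exact absurd (Finset.card_eq_zero.mp h) hne.ne_empty
      · exact h
    have hsub : X ∩ ({1, 2} : Finset ℕ) = ({1, 2} : Finset ℕ) := by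
      apply Finset.eq_of_subset_of_card_le Finset.inter_subset_right
      rw [h2]; simp
    rw [← hsub]
    exact Finset.inter_subset_left
  rcases hiBC with hiB | hiC
  · exact dove_aux k hk B C hcB hIcard hC2 hnA (full B hB2 hiB)
  · have hnA' : ¬ ({1, 2} : Finset ℕ) ⊆ C ∩ B := by rw [Finset.inter_comm]; exact hnA
    have hIcard' : (C ∩ B).card = k - 1 := by rw [Finset.inter_comm]; exact hIcard
    exact dove_aux k hk C B hcC hIcard' hB2 hnA' (full C hC2 hiC)
end

section
/- Let Γ be a finite abelian group of order m, H an aperiodic generating set of Γ, and Π = {(γ₁,j₁),...,(γ_ℓ,j_ℓ)} a fixed finite subset of Γ × ℤ. With N = [n] and i.i.d. H-valued weights ω(x) having full support on H, let F(N,ω,Π) = { A ⊆ N : (ω(A), |A| − ⌊n/2⌋) ∈ Π }. Then lim_{n→∞} E[|F(N,ω,Π)|] / C(n, ⌊n/2⌋) = ℓ/m. -/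
open Finset

variable {Γ : Type*}

section Helpers

set_option linter.unusedSectionVars false

open Filter

lemma div_div_same_cancel (x y c : ℝ) (hc : c ≠ 0) : (x/c)/(y/c) = x/y := by
  rcases eq_or_ne y 0 with rfl | hy
  · simp
  · field_simp

lemma half_lim : Tendsto (fun n : ℕ => ((n/2 : ℕ):ℝ)/(n:ℝ)) atTop (nhds (1/2 : ℝ)) := by
  have hb : Tendsto (fun n : ℕ => (1:ℝ)/(n:ℝ)) atTop (nhds 0) := tendsto_one_div_atTop_nhds_zero_nat
  have key : Tendsto (fun n : ℕ => ((n/2 : ℕ):ℝ)/(n:ℝ) - 1/2) atTop (nhds 0) := by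
    apply squeeze_zero_norm' _ hb
    filter_upwards [eventually_ge_atTop 1] with n hn
    have hn0 : (0:ℝ) < (n:ℝ) := by exact_mod_cast hn
    have hdm : 2 * (n / 2) + n % 2 = n := Nat.div_add_mod n 2
    have hr : n % 2 ≤ 1 := by omega
    have e : ((n/2 : ℕ):ℝ)/(n:ℝ) - 1/2 = -(((n % 2 : ℕ):ℝ))/(2*(n:ℝ)) := by
      have h2 : ((n/2 : ℕ):ℝ) = ((n:ℝ) - ((n % 2 : ℕ):ℝ))/2 := by
        have : ((2 * (n/2) + n % 2 : ℕ):ℝ) = (n:ℝ) := by rw [hdm]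
        push_cast at this
        linarith
      rw [h2]
      field_simp
      ring
    rw [Real.norm_eq_abs, e, abs_div, abs_neg, abs_of_nonneg (by positivity),
      abs_of_nonneg (by positivity)]
    rw [div_le_div_iff₀ (by positivity) hn0]
    have : ((n % 2 : ℕ):ℝ) ≤ 1 := by exact_mod_cast hr
    nlinarith
  have := key.add_const (1/2)
  simpa using this

lemma half_lim' : Tendsto (fun n : ℕ => (((n - n/2) : ℕ):ℝ)/(n:ℝ)) atTop (nhds (1/2 : ℝ)) := by
  have h1 : Tendsto (fun n : ℕ => 1 - ((n/2 : ℕ):ℝ)/(n:ℝ)) atTop (nhds (1/2 : ℝ)) := by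
    have := half_lim.const_sub (1:ℝ)
    norm_num at this ⊢
    exact this
  refine h1.congr' ?_
  filter_upwards [eventually_ge_atTop 1] with n hn
  have hn0 : (n:ℝ) ≠ 0 := by
    have : (0:ℝ) < (n:ℝ) := by exact_mod_cast hn
    linarith
  have hle : n/2 ≤ n := Nat.div_le_self n 2
  have e : ((n - n/2 : ℕ):ℝ) = (n:ℝ) - ((n/2:ℕ):ℝ) := by
    push_cast [hle]
    ring
  rw [e, sub_div, div_self hn0]

lemma div_lim_one {a b : ℕ → ℕ}
    (ha : Tendsto (fun n => ((a n : ℕ):ℝ)/(n:ℝ)) atTop (nhds (1/2 : ℝ)))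
    (hb : Tendsto (fun n => ((b n : ℕ):ℝ)/(n:ℝ)) atTop (nhds (1/2 : ℝ))) :
    Tendsto (fun n => ((a n : ℕ):ℝ)/((b n : ℕ):ℝ)) atTop (nhds (1 : ℝ)) := by
  have h := ha.div hb (by norm_num)
  have h2 : ((1:ℝ)/2)/((1:ℝ)/2) = 1 := by norm_num
  rw [h2] at h
  refine Tendsto.congr' ?_ h
  filter_upwards [eventually_ge_atTop 1] with n hn
  have hn0 : (n:ℝ) ≠ 0 := by
    have : (0:ℝ) < (n:ℝ) := by exact_mod_cast hn
    linarith
  rcases eq_or_ne ((b n : ℕ):ℝ) 0 with hbz | hbz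
  · simp [hbz]
  · simp only [Pi.div_apply]
    exact div_div_same_cancel _ _ _ hn0

lemma cast_div_shift_add (a : ℕ) :
    Tendsto (fun n : ℕ => ((n/2 + a : ℕ):ℝ)/(n:ℝ)) atTop (nhds (1/2 : ℝ)) := by
  have hz : Tendsto (fun n : ℕ => ((a:ℝ))/(n:ℝ)) atTop (nhds 0) :=
    tendsto_const_nhds.div_atTop tendsto_natCast_atTop_atTop
  have := half_lim.add hz
  rw [add_zero] at this
  refine this.congr ?_
  intro n
  push_cast
  rw [add_div]

lemma cast_div_shift_sub (a : ℕ) :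
    Tendsto (fun n : ℕ => ((n - n/2 + a : ℕ):ℝ)/(n:ℝ)) atTop (nhds (1/2 : ℝ)) := by
  have hz : Tendsto (fun n : ℕ => ((a:ℝ))/(n:ℝ)) atTop (nhds 0) :=
    tendsto_const_nhds.div_atTop tendsto_natCast_atTop_atTop
  have := half_lim'.add hz
  rw [add_zero] at this
  refine this.congr ?_
  intro n
  push_cast
  rw [add_div]

lemma cast_div_half_sub (a : ℕ) :
    Tendsto (fun n : ℕ => ((n/2 - a : ℕ):ℝ)/(n:ℝ)) atTop (nhds (1/2 : ℝ)) := by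
  have hz : Tendsto (fun n : ℕ => ((a:ℝ))/(n:ℝ)) atTop (nhds 0) :=
    tendsto_const_nhds.div_atTop tendsto_natCast_atTop_atTop
  have h := half_lim.sub hz
  rw [sub_zero] at h
  refine h.congr' ?_
  filter_upwards [eventually_ge_atTop (2*a)] with n hn
  have hle : a ≤ n/2 := by omega
  rw [← sub_div]
  congr 1
  push_cast [hle]
  ring

lemma cast_div_other_sub (a : ℕ) :
    Tendsto (fun n : ℕ => ((n - n/2 - a : ℕ):ℝ)/(n:ℝ)) atTop (nhds (1/2 : ℝ)) := by
  have hz : Tendsto (fun n : ℕ => ((a:ℝ))/(n:ℝ)) atTop (nhds 0) :=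
    tendsto_const_nhds.div_atTop tendsto_natCast_atTop_atTop
  have h := half_lim'.sub hz
  rw [sub_zero] at h
  refine h.congr' ?_
  filter_upwards [eventually_ge_atTop (2*a + 2)] with n hn
  have hle : a ≤ n - n/2 := by omega
  rw [← sub_div]
  congr 1
  push_cast [hle]
  ring

lemma choose_ratio_up (a : ℕ) :
    Tendsto (fun n : ℕ => ((n.choose (n/2 + a)):ℝ)/((n.choose (n/2)):ℝ)) atTop (nhds (1:ℝ)) := by
  induction a with
  | zero =>
    refine tendsto_const_nhds.congr' ?_
    filter_upwards [eventually_ge_atTop 0] with n _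
    have : 0 < n.choose (n/2) := Nat.choose_pos (Nat.div_le_self n 2)
    rw [Nat.add_zero, div_self (by exact_mod_cast this.ne')]
  | succ a ih =>
    have hρ : Tendsto (fun n : ℕ => ((n - (n/2 + a) : ℕ):ℝ)/((n/2 + a + 1 : ℕ):ℝ))
        atTop (nhds (1:ℝ)) := by
      have h1 : Tendsto (fun n : ℕ => ((n - n/2 - a : ℕ):ℝ)/(n:ℝ)) atTop (nhds (1/2:ℝ)) :=
        cast_div_other_sub a
      have h2 := cast_div_shift_add (a + 1)
      have := div_lim_one (a := fun n => n - n/2 - a) (b := fun n => n/2 + (a+1)) h1 h2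
      refine this.congr fun n => ?_
      have e1 : n - n/2 - a = n - (n/2 + a) := by omega
      have e2 : n/2 + (a+1) = n/2 + a + 1 := by omega
      simp only [e1, e2]
    have := ih.mul hρ
    rw [mul_one] at this
    refine this.congr fun n => ?_
    have hc : (n.choose (n/2 + a + 1) : ℝ) * ((n/2 + a + 1 : ℕ):ℝ)
        = (n.choose (n/2 + a) : ℝ) * ((n - (n/2 + a) : ℕ):ℝ) := by
      exact_mod_cast congrArg (fun x : ℕ => (x:ℝ)) (Nat.choose_succ_right_eq n (n/2 + a))
    have hd : ((n/2 + a + 1 : ℕ):ℝ) ≠ 0 := by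
      have : 0 < n/2 + a + 1 := by omega
      exact_mod_cast this.ne'
    have hB : ((n.choose (n/2)):ℝ) ≠ 0 := by
      exact_mod_cast (Nat.choose_pos (Nat.div_le_self n 2)).ne'
    rw [show n/2 + (a+1) = n/2 + a + 1 by omega]
    have hX : ((n.choose (n/2 + a + 1)):ℝ)
        = (n.choose (n/2 + a) : ℝ) * ((n - (n/2 + a) : ℕ):ℝ) / ((n/2 + a + 1 : ℕ):ℝ) := by
      rw [eq_div_iff hd]
      linarith [hc]
    rw [hX]
    field_simp

lemma choose_ratio_down (a : ℕ) :
    Tendsto (fun n : ℕ => ((n.choose (n/2 - a)):ℝ)/((n.choose (n/2)):ℝ)) atTop (nhds (1:ℝ)) := by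
  induction a with
  | zero =>
    refine tendsto_const_nhds.congr' ?_
    filter_upwards [eventually_ge_atTop 0] with n _
    have : 0 < n.choose (n/2) := Nat.choose_pos (Nat.div_le_self n 2)
    rw [Nat.sub_zero, div_self (by exact_mod_cast this.ne')]
  | succ a ih =>
    have hρ : Tendsto (fun n : ℕ => ((n/2 - a : ℕ):ℝ)/((n - (n/2 - (a+1)) : ℕ):ℝ))
        atTop (nhds (1:ℝ)) := by
      have h1 := cast_div_half_sub a
      have h2' := cast_div_shift_sub (a+1)
      have h2 : Tendsto (fun n : ℕ => ((n - (n/2 - (a+1)) : ℕ):ℝ)/(n:ℝ))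
          atTop (nhds (1/2:ℝ)) := by
        refine h2'.congr' ?_
        filter_upwards [eventually_ge_atTop (2*(a+1))] with n hn
        have e1 : n - n/2 + (a+1) = n - (n/2 - (a+1)) := by omega
        simp only [e1]
      exact div_lim_one (a := fun n => n/2 - a) (b := fun n => n - (n/2 - (a+1))) h1 h2
    have hmul := ih.mul hρ
    rw [mul_one] at hmul
    refine hmul.congr' ?_
    filter_upwards [eventually_ge_atTop (2*a + 2)] with n hn
    have hk : n/2 - (a+1) + 1 = n/2 - a := by omega
    have hc0 := Nat.choose_succ_right_eq n (n/2 - (a+1))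
    rw [hk] at hc0
    have hc : ((n.choose (n/2 - a)):ℝ) * ((n/2 - a : ℕ):ℝ)
        = (n.choose (n/2 - (a+1)) : ℝ) * ((n - (n/2 - (a+1)) : ℕ):ℝ) := by
      exact_mod_cast congrArg (fun x : ℕ => (x:ℝ)) hc0
    have hden : ((n - (n/2 - (a+1)) : ℕ):ℝ) ≠ 0 := by
      have : 0 < n - (n/2 - (a+1)) := by omega
      exact_mod_cast this.ne'
    have hB : ((n.choose (n/2)):ℝ) ≠ 0 := by
      exact_mod_cast (Nat.choose_pos (Nat.div_le_self n 2)).ne'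
    have hX : ((n.choose (n/2 - (a+1))):ℝ)
        = (n.choose (n/2 - a) : ℝ) * ((n/2 - a : ℕ):ℝ) / ((n - (n/2 - (a+1)) : ℕ):ℝ) := by
      rw [eq_div_iff hden]
      linarith [hc]
    show _ = ((n.choose (n/2 - (a+1))):ℝ) / _
    rw [hX]
    field_simp


variable {Γ : Type*} [AddCommGroup Γ] {H : Set Γ}

lemma isSumOf_zero : IsSumOf H 0 (0 : Γ) :=
  ⟨fun t => t.elim0, fun t => t.elim0, by simp⟩

lemma isSumOf_add {a b : ℕ} {x y : Γ} (hx : IsSumOf H a x) (hy : IsSumOf H b y) :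
    IsSumOf H (a + b) (x + y) := by
  obtain ⟨f, hf, hfs⟩ := hx
  obtain ⟨g, hg, hgs⟩ := hy
  refine ⟨fun i => Sum.elim f g (finSumFinEquiv.symm i), fun t => ?_, ?_⟩
  · show Sum.elim f g (finSumFinEquiv.symm t) ∈ H
    rcases finSumFinEquiv.symm t with t | t
    · exact hf t
    · exact hg t
  · show ∑ t : Fin (a + b), Sum.elim f g (finSumFinEquiv.symm t) = x + y
    rw [Equiv.sum_comp finSumFinEquiv.symm (Sum.elim f g), Fintype.sum_sum_type]
    simp [hfs, hgs]

lemma isSumOf_nsmul {a : ℕ} {x : Γ} (hx : IsSumOf H a x) (t : ℕ) :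
    IsSumOf H (t * a) (t • x) := by
  induction t with
  | zero => simpa using isSumOf_zero
  | succ t ih =>
    have h2 := isSumOf_add ih hx
    rw [succ_nsmul, Nat.succ_mul]
    exact h2

lemma isSumOf_neg [Fintype Γ] {a : ℕ} {x : Γ} (hx : IsSumOf H a x) :
    ∃ b, IsSumOf H b (-x) := by
  have hord : 0 < addOrderOf x := addOrderOf_pos x
  refine ⟨(addOrderOf x - 1) * a, ?_⟩
  have h := isSumOf_nsmul hx (addOrderOf x - 1)
  have : (addOrderOf x - 1) • x = -x := by
    have h1 : (addOrderOf x - 1) • x + x = addOrderOf x • x := by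
      rw [← succ_nsmul]
      congr 1
      omega
    rw [addOrderOf_nsmul_eq_zero] at h1
    linear_combination (norm := abel) h1
  rwa [this] at h

lemma exists_isSumOf [Fintype Γ] (hgen : AddSubgroup.closure H = ⊤) (γ : Γ) :
    ∃ k, IsSumOf H k γ := by
  have hmem : γ ∈ AddSubgroup.closure H := by rw [hgen]; trivial
  induction hmem using AddSubgroup.closure_induction with
  | mem x hx => exact ⟨1, fun _ => x, fun _ => hx, by simp⟩
  | zero => exact ⟨0, isSumOf_zero⟩
  | add x y _ _ hx hy =>
    obtain ⟨k₁, h₁⟩ := hx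
    obtain ⟨k₂, h₂⟩ := hy
    exact ⟨k₁ + k₂, isSumOf_add h₁ h₂⟩
  | neg x _ hx =>
    obtain ⟨k, h⟩ := hx
    exact isSumOf_neg h

lemma isSumOf_mul_zero {a : ℕ} (hx : IsSumOf H a (0:Γ)) (t : ℕ) : IsSumOf H (t * a) (0:Γ) := by
  have := isSumOf_nsmul hx t
  simpa using this

lemma exists_N0 (haper : Aperiodic H) : ∃ N, ∀ n ≥ N, IsSumOf H n (0 : Γ) := by
  -- the set of lengths of H-sums equal to 0
  set s : Set ℤ := {z : ℤ | ∃ n : ℕ, (n : ℤ) = z ∧ 1 ≤ n ∧ IsSumOf H n (0 : Γ)} with hs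
  -- members of the submonoid closure are lengths
  have hM : ∀ z ∈ AddSubmonoid.closure s, ∃ n : ℕ, (n : ℤ) = z ∧ IsSumOf H n (0 : Γ) := by
    intro z hz
    induction hz using AddSubmonoid.closure_induction with
    | mem x hx => obtain ⟨n, h1, _, h3⟩ := hx; exact ⟨n, h1, h3⟩
    | zero => exact ⟨0, by simp, isSumOf_zero⟩
    | add x y _ _ hx hy =>
      obtain ⟨n₁, e₁, s₁⟩ := hx; obtain ⟨n₂, e₂, s₂⟩ := hy
      exact ⟨n₁ + n₂, by push_cast [e₁, e₂]; ring, by simpa using isSumOf_add s₁ s₂⟩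
  -- subgroup closure elements are differences of submonoid elements
  have hG : ∀ z ∈ AddSubgroup.closure s, ∃ x ∈ AddSubmonoid.closure s,
      ∃ y ∈ AddSubmonoid.closure s, z = x - y := by
    intro z hz
    induction hz using AddSubgroup.closure_induction with
    | mem x hx => exact ⟨x, AddSubmonoid.subset_closure hx, 0, zero_mem _, by ring⟩
    | zero => exact ⟨0, zero_mem _, 0, zero_mem _, by ring⟩
    | add x y _ _ hx hy =>
      obtain ⟨x₁, m₁, y₁, m₁', e₁⟩ := hx; obtain ⟨x₂, m₂, y₂, m₂', e₂⟩ := hy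
      exact ⟨x₁ + x₂, add_mem m₁ m₂, y₁ + y₂, add_mem m₁' m₂', by rw [e₁, e₂]; ring⟩
    | neg x _ hx =>
      obtain ⟨x₁, m₁, y₁, m₁', e₁⟩ := hx
      exact ⟨y₁, m₁', x₁, m₁, by rw [e₁]; ring⟩
  -- the subgroup generated by s is cyclic, generated by some a
  obtain ⟨a, ha⟩ := Int.subgroup_cyclic (AddSubgroup.closure s)
  -- a.natAbs divides all lengths
  have hdvd : ∀ ℓ : ℕ, 1 ≤ ℓ → IsSumOf H ℓ (0 : Γ) → a.natAbs ∣ ℓ := by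
    intro ℓ h1 h2
    have : (ℓ : ℤ) ∈ AddSubgroup.closure s := AddSubgroup.subset_closure ⟨ℓ, rfl, h1, h2⟩
    rw [ha, AddSubgroup.mem_closure_singleton] at this
    obtain ⟨n, hn⟩ := this
    have : a ∣ (ℓ : ℤ) := ⟨n, by rw [← hn, smul_eq_mul, mul_comm]⟩
    exact Int.natAbs_dvd_natAbs.mpr (by simpa using this)
  have ha1 : a.natAbs = 1 := haper _ hdvd
  -- so 1 ∈ the subgroup closure
  have h1mem : (1 : ℤ) ∈ AddSubgroup.closure s := by
    rw [ha, AddSubgroup.mem_closure_singleton]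
    rcases Int.natAbs_eq_iff.mp ha1 with h | h
    · exact ⟨1, by rw [h]; simp⟩
    · exact ⟨-1, by rw [h]; simp⟩
  obtain ⟨x, hx, y, hy, hxy⟩ := hG 1 h1mem
  obtain ⟨u, hu, hsu⟩ := hM x hx
  obtain ⟨v, hv, hsv⟩ := hM y hy
  have huv : u = v + 1 := by
    have h : (u : ℤ) - v = 1 := by rw [hu, hv, ← hxy]
    omega
  rcases Nat.eq_zero_or_pos v with hv0 | hv0
  · refine ⟨1, fun n _ => ?_⟩
    have h1 : IsSumOf H 1 (0 : Γ) := by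
      have : u = 1 := by omega
      rwa [this] at hsu
    simpa using isSumOf_mul_zero h1 n
  · refine ⟨v * v, fun n hn => ?_⟩
    set t := n / v with ht
    set r := n % v with hr
    have hdm : v * t + r = n := Nat.div_add_mod n v
    have hrv : r < v := Nat.mod_lt n hv0
    have hrt : r ≤ t := by
      have hvt : v ≤ t := (Nat.le_div_iff_mul_le hv0).mpr hn
      omega
    have h2 : r * v ≤ t * v := Nat.mul_le_mul_right v hrt
    have key : r * u + (t - r) * v = n := by
      rw [huv, Nat.mul_succ, Nat.sub_mul]
      have e1 : r * v + r + (t * v - r * v) = r + (r * v + (t * v - r * v)) := by ring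
      rw [e1, Nat.add_sub_cancel' h2]
      linarith [hdm, mul_comm t v]
    have s1 : IsSumOf H (r * u) (0 : Γ) := isSumOf_mul_zero hsu r
    have s2 : IsSumOf H ((t - r) * v) (0 : Γ) := isSumOf_mul_zero hsv (t - r)
    have h3 := isSumOf_add s1 s2
    rw [key, add_zero] at h3
    exact h3


lemma exists_k0 [Fintype Γ] (hgen : AddSubgroup.closure H = ⊤) (haper : Aperiodic H) :
    ∃ k0 : ℕ, 1 ≤ k0 ∧ ∀ k ≥ k0, ∀ γ : Γ, IsSumOf H k γ := by
  classical
  obtain ⟨N, hN⟩ := exists_N0 haper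
  have hex : ∀ γ : Γ, ∃ k, IsSumOf H k γ := fun γ => exists_isSumOf hgen γ
  let kf : Γ → ℕ := fun γ => Nat.find (hex γ)
  let K := Finset.univ.sup kf
  refine ⟨N + K + 1, by omega, fun k hk γ => ?_⟩
  have h1 : IsSumOf H (kf γ) γ := Nat.find_spec (hex γ)
  have h2 : kf γ ≤ K := Finset.le_sup (Finset.mem_univ γ)
  have h3 : IsSumOf H (k - kf γ) (0 : Γ) := hN _ (by omega)
  have h4 := isSumOf_add h1 h3
  have e : kf γ + (k - kf γ) = k := by omega
  rwa [e, add_zero] at h4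


variable [Fintype Γ] [DecidableEq Γ]

noncomputable def qd (p : Γ → ℝ) : ℕ → Γ → ℝ
  | 0, γ => if γ = 0 then 1 else 0
  | (k+1), γ => ∑ η, p η * qd p k (γ - η)

variable {p : Γ → ℝ} {H : Set Γ}

lemma qd_nonneg (hp : ∀ γ, 0 ≤ p γ) (k : ℕ) (γ : Γ) : 0 ≤ qd p k γ := by
  induction k generalizing γ with
  | zero => simp only [qd]; positivity
  | succ k ih => exact Finset.sum_nonneg fun η _ => mul_nonneg (hp η) (ih _)

lemma qd_sum (hs : ∑ γ : Γ, p γ = 1) (k : ℕ) : ∑ γ : Γ, qd p k γ = 1 := by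
  induction k with
  | zero => simp [qd]
  | succ k ih =>
    simp only [qd]
    rw [Finset.sum_comm]
    have : ∀ η : Γ, ∑ γ : Γ, p η * qd p k (γ - η) = p η := by
      intro η
      rw [← Finset.mul_sum]
      have e : ∑ i : Γ, qd p k (i - η) = ∑ γ : Γ, qd p k γ :=
        Fintype.sum_equiv (Equiv.subRight η) _ _ (fun γ => rfl)
      rw [e, ih, mul_one]
    rw [Finset.sum_congr rfl fun η _ => this η, hs]

lemma qd_conv (a b : ℕ) (γ : Γ) :
    qd p (a + b) γ = ∑ η, qd p a η * qd p b (γ - η) := by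
  induction a generalizing γ with
  | zero =>
    simp only [Nat.zero_add, qd]
    rw [Finset.sum_eq_single (0 : Γ)]
    · simp
    · intro η _ hη; simp [hη]
    · simp
  | succ a ih =>
    have e1 : a + 1 + b = (a + b) + 1 := by omega
    rw [e1]
    simp only [qd]
    calc ∑ η', p η' * qd p (a + b) (γ - η')
        = ∑ η', ∑ δ, p η' * (qd p a δ * qd p b (γ - η' - δ)) := by
          refine Finset.sum_congr rfl fun η' _ => ?_
          rw [ih, Finset.mul_sum]
      _ = ∑ η', ∑ η, p η' * (qd p a (η - η') * qd p b (γ - η)) := by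
          refine Finset.sum_congr rfl fun η' _ => ?_
          refine Fintype.sum_equiv (Equiv.addRight η') _ _ fun δ => ?_
          simp [sub_sub, add_comm]
      _ = ∑ η, ∑ η', p η' * (qd p a (η - η') * qd p b (γ - η)) := Finset.sum_comm
      _ = ∑ η, (∑ η', p η' * qd p a (η - η')) * qd p b (γ - η) := by
          refine Finset.sum_congr rfl fun η _ => ?_
          rw [Finset.sum_mul]
          exact Finset.sum_congr rfl fun η' _ => by ring

lemma qd_pos (hpos : ∀ η ∈ H, 0 < p η) (hp : ∀ γ, 0 ≤ p γ) {k : ℕ} {γ : Γ}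
    (h : IsSumOf H k γ) : 0 < qd p k γ := by
  induction k generalizing γ with
  | zero =>
    obtain ⟨f, _, hfs⟩ := h
    have : γ = 0 := by rw [← hfs]; simp
    simp [qd, this]
  | succ k ih =>
    obtain ⟨f, hf, hfs⟩ := h
    have htail : IsSumOf H k (γ - f 0) := by
      refine ⟨fun i => f i.succ, fun t => hf _, ?_⟩
      rw [← hfs, Fin.sum_univ_succ]
      abel
    have hterm : 0 < p (f 0) * qd p k (γ - f 0) :=
      mul_pos (hpos _ (hf 0)) (ih htail)
    have hle : p (f 0) * qd p k (γ - f 0) ≤ ∑ η, p η * qd p k (γ - η) :=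
      Finset.single_le_sum (fun η _ => mul_nonneg (hp η) (qd_nonneg hp _ _)) (Finset.mem_univ _)
    calc (0:ℝ) < _ := hterm
      _ ≤ _ := hle

lemma qd_tendsto (hp : ∀ γ, 0 ≤ p γ) (hs : ∑ γ : Γ, p γ = 1)
    (k0 : ℕ) (hk0 : 1 ≤ k0) (hq0 : ∀ γ, 0 < qd p k0 γ) (γ0 : Γ) :
    Tendsto (fun k => qd p k γ0) atTop (nhds ((Fintype.card Γ : ℝ)⁻¹)) := by
  classical
  set m := Fintype.card Γ with hmdef
  have hm : 0 < m := Fintype.card_pos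
  have hmne : ((m : ℝ)) ≠ 0 := Nat.cast_ne_zero.mpr hm.ne'
  set u : ℝ := (m : ℝ)⁻¹ with hu
  have hmu : (m : ℝ) * u = 1 := mul_inv_cancel₀ hmne
  have hunn : 0 ≤ u := by positivity
  set D : ℕ → ℝ := fun k => ∑ γ, |qd p k γ - u| with hD
  have hDnonneg : ∀ k, 0 ≤ D k := fun k => Finset.sum_nonneg fun γ _ => abs_nonneg _
  have hD2 : ∀ k, D k ≤ 2 := by
    intro k
    have : ∀ γ : Γ, |qd p k γ - u| ≤ qd p k γ + u := by
      intro γ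
      calc |qd p k γ - u| ≤ |qd p k γ| + |u| := abs_sub _ _
        _ = qd p k γ + u := by
            rw [abs_of_nonneg (qd_nonneg hp _ _), abs_of_nonneg hunn]
    calc D k ≤ ∑ γ, (qd p k γ + u) := Finset.sum_le_sum fun γ _ => this γ
      _ = 1 + (m : ℝ) * u := by
          rw [Finset.sum_add_distrib, qd_sum hs, Finset.sum_const, nsmul_eq_mul]
          rfl
      _ = 2 := by rw [hmu]; norm_num
  set ε := Finset.univ.inf' Finset.univ_nonempty (qd p k0) with hε
  have hεpos : 0 < ε := by
    rw [hε, Finset.lt_inf'_iff]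
    exact fun γ _ => hq0 γ
  have hεle : ∀ η, ε ≤ qd p k0 η := fun η => Finset.inf'_le _ (Finset.mem_univ η)
  set c := 1 - (m : ℝ) * ε with hc
  have hcsum : ∑ η : Γ, (qd p k0 η - ε) = c := by
    rw [Finset.sum_sub_distrib, qd_sum hs, Finset.sum_const, nsmul_eq_mul, hc]
    rfl
  have hc0 : 0 ≤ c := by
    rw [← hcsum]
    exact Finset.sum_nonneg fun η _ => by linarith [hεle η]
  have hc1 : c < 1 := by
    have : 0 < (m : ℝ) * ε := by positivity
    rw [hc]; linarith
  have hsub1 : ∀ (k : ℕ) (γ : Γ), ∑ η : Γ, qd p k (γ - η) = 1 := by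
    intro k γ
    have e := Fintype.sum_equiv (Equiv.subLeft γ) (fun η => qd p k (γ - η)) (qd p k) (fun η => rfl)
    exact e.trans (qd_sum hs k)
  have key : ∀ k γ, qd p (k0 + k) γ - u = ∑ η, (qd p k0 η - ε) * (qd p k (γ - η) - u) := by
    intro k γ
    have expand : ∀ η, (qd p k0 η - ε) * (qd p k (γ - η) - u)
        = qd p k0 η * qd p k (γ - η) - u * qd p k0 η - ε * qd p k (γ - η) + ε * u := by
      intro η; ring
    rw [Finset.sum_congr rfl fun η _ => expand η]
    rw [Finset.sum_add_distrib, Finset.sum_sub_distrib, Finset.sum_sub_distrib,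
      ← Finset.mul_sum, ← Finset.mul_sum, qd_sum hs, hsub1, ← qd_conv, Finset.sum_const,
      nsmul_eq_mul]
    have : (((Finset.univ : Finset Γ).card) : ℝ) = (m : ℝ) := by rw [hmdef]; rfl
    rw [this]
    linear_combination (-ε) * hmu
  have contr : ∀ k, D (k0 + k) ≤ c * D k := by
    intro k
    have hb : ∀ γ, |qd p (k0 + k) γ - u| ≤ ∑ η, (qd p k0 η - ε) * |qd p k (γ - η) - u| := by
      intro γ
      rw [key k γ]
      refine (Finset.abs_sum_le_sum_abs _ _).trans ?_
      refine Finset.sum_le_sum fun η _ => ?_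
      rw [abs_mul, abs_of_nonneg (by linarith [hεle η])]
    calc D (k0 + k) ≤ ∑ γ, ∑ η, (qd p k0 η - ε) * |qd p k (γ - η) - u| :=
          Finset.sum_le_sum fun γ _ => hb γ
      _ = ∑ η, ∑ γ, (qd p k0 η - ε) * |qd p k (γ - η) - u| := Finset.sum_comm
      _ = ∑ η : Γ, (qd p k0 η - ε) * D k := by
          refine Finset.sum_congr rfl fun η _ => ?_
          rw [← Finset.mul_sum]
          congr 1
          exact Fintype.sum_equiv (Equiv.subRight η) _ _ fun γ => rfl
      _ = c * D k := by rw [← Finset.sum_mul, hcsum]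
  have bound : ∀ t r, D (r + k0 * t) ≤ 2 * c ^ t := by
    intro t
    induction t with
    | zero => intro r; simpa using hD2 r
    | succ t ih =>
      intro r
      have e : r + k0 * (t + 1) = k0 + (r + k0 * t) := by ring
      rw [e]
      calc D (k0 + (r + k0 * t)) ≤ c * D (r + k0 * t) := contr _
        _ ≤ c * (2 * c ^ t) := by
            exact mul_le_mul_of_nonneg_left (ih r) hc0
        _ = 2 * c ^ (t + 1) := by ring
  have Dk : ∀ k, D k ≤ 2 * c ^ (k / k0) := by
    intro k
    have := bound (k / k0) (k % k0)
    rwa [Nat.mod_add_div k k0] at this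
  have hdiv : Tendsto (fun k : ℕ => k / k0) atTop atTop := by
    refine tendsto_atTop_atTop.mpr fun b => ⟨k0 * b, fun n hn => ?_⟩
    refine (Nat.le_div_iff_mul_le (by omega)).mpr ?_
    rwa [mul_comm] at hn
  have hDto : Tendsto D atTop (nhds 0) := by
    have h2 : Tendsto (fun k : ℕ => 2 * c ^ (k / k0)) atTop (nhds 0) := by
      have h3 := (tendsto_pow_atTop_nhds_zero_of_lt_one hc0 hc1).comp hdiv
      have h4 := h3.const_mul (2 : ℝ)
      simpa using h4
    exact squeeze_zero hDnonneg Dk h2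
  have habs : Tendsto (fun k => qd p k γ0 - u) atTop (nhds 0) := by
    apply squeeze_zero_norm _ hDto
    intro k
    simp only [Real.norm_eq_abs]
    exact Finset.single_le_sum (f := fun γ => |qd p k γ - u|) (fun γ _ => abs_nonneg _)
      (Finset.mem_univ γ0)
  have hfin := habs.add_const u
  simpa using hfin

noncomputable def TT (p : Γ → ℝ) (α : Type*) [Fintype α] [DecidableEq α] (g : Γ → ℝ) : ℝ :=
  ∑ f : α → Γ, (∏ a, p (f a)) * g (∑ a, f a)

variable {p : Γ → ℝ}

lemma TT_congr {α β : Type*} [Fintype α] [DecidableEq α] [Fintype β] [DecidableEq β] (e : α ≃ β) (g : Γ → ℝ) :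
    TT p α g = TT p β g := by
  unfold TT
  refine Fintype.sum_equiv (Equiv.arrowCongr e (Equiv.refl Γ)) _ _ fun f => ?_
  have h1 : ∏ a : α, p (f a) = ∏ b : β, p (f (e.symm b)) :=
    (Equiv.prod_comp e.symm fun a => p (f a)).symm
  have h2 : ∑ a : α, f a = ∑ b : β, f (e.symm b) :=
    (Equiv.sum_comp e.symm fun a => f a).symm
  simp only [Equiv.arrowCongr_apply, Equiv.refl_apply, Function.comp]
  rw [h1, h2]

lemma TT_fin (g : Γ → ℝ) (k : ℕ) : TT p (Fin k) g = ∑ γ, qd p k γ * g γ := by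
  induction k generalizing g with
  | zero =>
    unfold TT
    rw [Fintype.sum_unique (fun f : Fin 0 → Γ => (∏ a : Fin 0, p (f a)) * g (∑ a : Fin 0, f a))]
    simp [qd]
  | succ k ih =>
    unfold TT
    rw [← Equiv.sum_comp (Fin.consEquiv (fun _ : Fin (k+1) => Γ))
      (fun f : Fin (k+1) → Γ => (∏ a, p (f a)) * g (∑ a, f a)), Fintype.sum_prod_type]
    have step : ∀ γ₀ : Γ, ∑ f : Fin k → Γ,
        (∏ a, p ((Fin.consEquiv (fun _ : Fin (k+1) => Γ)) (γ₀, f) a)) *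
          g (∑ a, (Fin.consEquiv (fun _ : Fin (k+1) => Γ)) (γ₀, f) a)
        = p γ₀ * ∑ δ, qd p k δ * g (γ₀ + δ) := by
      intro γ₀
      rw [← ih (fun s => g (γ₀ + s))]
      unfold TT
      rw [Finset.mul_sum]
      refine Finset.sum_congr rfl fun f _ => ?_
      have hp : ∏ a : Fin (k+1), p ((Fin.consEquiv (fun _ : Fin (k+1) => Γ)) (γ₀, f) a)
          = p γ₀ * ∏ a : Fin k, p (f a) := by
        rw [Fin.prod_univ_succ]
        simp [Fin.consEquiv]
      have hsm : ∑ a : Fin (k+1), (Fin.consEquiv (fun _ : Fin (k+1) => Γ)) (γ₀, f) a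
          = γ₀ + ∑ a : Fin k, f a := by
        rw [Fin.sum_univ_succ]
        simp [Fin.consEquiv]
      rw [hp, hsm]
      ring
    rw [Finset.sum_congr rfl fun γ₀ _ => step γ₀]
    calc ∑ γ₀, p γ₀ * ∑ δ, qd p k δ * g (γ₀ + δ)
        = ∑ γ₀, ∑ δ, p γ₀ * (qd p k δ * g (γ₀ + δ)) := by
          exact Finset.sum_congr rfl fun γ₀ _ => Finset.mul_sum _ _ _
      _ = ∑ γ₀, ∑ γ, p γ₀ * (qd p k (γ - γ₀) * g γ) := by
          refine Finset.sum_congr rfl fun γ₀ _ => ?_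
          refine Fintype.sum_equiv (Equiv.addLeft γ₀) _ _ fun δ => ?_
          simp [add_sub_cancel_left]
      _ = ∑ γ, ∑ γ₀, p γ₀ * (qd p k (γ - γ₀) * g γ) := Finset.sum_comm
      _ = ∑ γ, qd p (k+1) γ * g γ := by
          refine Finset.sum_congr rfl fun γ _ => ?_
          show _ = (∑ η, p η * qd p k (γ - η)) * g γ
          rw [Finset.sum_mul]
          exact Finset.sum_congr rfl fun γ₀ _ => by ring

lemma univ_inst_eq {α : Type*} (i1 i2 : Fintype α) : @Finset.univ α i1 = @Finset.univ α i2 := by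
  cases Subsingleton.elim i1 i2; rfl

lemma TT_one (hs : ∑ γ : Γ, p γ = 1) (α : Type*) [Fintype α] [DecidableEq α] :
    TT p α (fun _ => (1:ℝ)) = 1 := by
  rw [TT_congr (Fintype.equivFin α), TT_fin]
  simp [qd_sum hs _]

lemma key_lemma (hs : ∑ γ : Γ, p γ = 1) (n : ℕ) (A : Finset (Fin n)) (g : Γ → ℝ) :
    ∑ ω : Fin n → Γ, (∏ x, p (ω x)) * g (∑ x ∈ A, ω x) = ∑ γ, qd p A.card γ * g γ := by
  classical
  set e := (Equiv.piEquivPiSubtypeProd (fun x : Fin n => x ∈ A) (fun _ => Γ)).symm with he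
  rw [← Equiv.sum_comp e (fun ω : Fin n → Γ => (∏ x, p (ω x)) * g (∑ x ∈ A, ω x))]
  have hterm : ∀ fh : (∀ _ : {x : Fin n // x ∈ A}, Γ) × (∀ _ : {x : Fin n // ¬ x ∈ A}, Γ),
      (∏ x, p (e fh x)) * g (∑ x ∈ A, e fh x)
      = ((∏ x : {x : Fin n // x ∈ A}, p (fh.1 x)) * g (∑ x : {x : Fin n // x ∈ A}, fh.1 x))
        * ∏ x : {x : Fin n // ¬ x ∈ A}, p (fh.2 x) := by
    rintro ⟨f, h⟩
    have hmem : ∀ x : {x : Fin n // x ∈ A}, e (f, h) ↑x = f x := by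
      rintro ⟨x, hx⟩
      simp [he, Equiv.piEquivPiSubtypeProd, hx]
    have hnot : ∀ x : {x : Fin n // ¬ x ∈ A}, e (f, h) ↑x = h x := by
      rintro ⟨x, hx⟩
      simp [he, Equiv.piEquivPiSubtypeProd, hx]
    have hprod : ∏ x, p (e (f, h) x)
        = (∏ x : {x : Fin n // x ∈ A}, p (f x)) * ∏ x : {x : Fin n // ¬ x ∈ A}, p (h x) := by
      rw [← Fintype.prod_subtype_mul_prod_subtype (fun x => x ∈ A) (fun x => p (e (f, h) x))]
      congr 1
      · exact Finset.prod_congr (univ_inst_eq _ _) fun x _ => by rw [hmem x]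
      · exact Finset.prod_congr (univ_inst_eq _ _) fun x _ => by rw [hnot x]
    have hsm : ∑ x ∈ A, e (f, h) x = ∑ x : {x : Fin n // x ∈ A}, f x := by
      rw [← Finset.sum_coe_sort A (fun x => e (f, h) x)]
      exact Finset.sum_congr rfl fun x _ => by rw [hmem x]
    rw [hprod, hsm]
    ring
  rw [Fintype.sum_congr _ _ hterm, Fintype.sum_prod_type]
  have : ∀ f : ∀ _ : {x : Fin n // x ∈ A}, Γ,
      ∑ h : ∀ _ : {x : Fin n // ¬ x ∈ A}, Γ,
        ((∏ x, p (f x)) * g (∑ x, f x)) * ∏ x, p (h x)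
      = ((∏ x, p (f x)) * g (∑ x, f x)) * TT p {x : Fin n // ¬ x ∈ A} (fun _ => 1) := by
    intro f
    rw [← Finset.mul_sum]
    congr 1
    unfold TT
    exact Finset.sum_congr rfl fun h _ => by ring
  rw [Finset.sum_congr rfl fun f _ => this f]
  rw [TT_one hs]
  have : ∑ f : ∀ _ : {x : Fin n // x ∈ A}, Γ, ((∏ x, p (f x)) * g (∑ x, f x)) * 1
      = TT p {x : Fin n // x ∈ A} g := by
    unfold TT
    exact Finset.sum_congr rfl fun f _ => by ring
  rw [this, TT_congr (Fintype.equivFinOfCardEq (Fintype.card_coe A)), TT_fin]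


variable {p : Γ → ℝ}

lemma indicator_swap (P : Finset (Γ × ℤ)) (s : ℕ) (c : ℤ) :
    ∑ γ : Γ, qd p s γ * (if (γ, c) ∈ P then (1:ℝ) else 0)
      = ∑ z ∈ P, (if z.2 = c then qd p s z.1 else 0) := by
  classical
  have l : ∑ γ : Γ, qd p s γ * (if (γ, c) ∈ P then (1:ℝ) else 0)
      = ∑ γ ∈ Finset.univ.filter (fun γ => (γ, c) ∈ P), qd p s γ := by
    rw [Finset.sum_filter]
    exact Finset.sum_congr rfl fun γ _ => by rw [mul_ite, mul_one, mul_zero]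
  have r : ∑ z ∈ P, (if z.2 = c then qd p s z.1 else 0)
      = ∑ z ∈ P.filter (fun z => z.2 = c), qd p s z.1 := (Finset.sum_filter _ _).symm
  rw [l, r]
  refine Finset.sum_nbij' (fun γ => (γ, c)) (fun z => z.1) ?_ ?_ ?_ ?_ ?_
  · intro γ hγ
    rw [Finset.mem_filter] at hγ ⊢
    exact ⟨hγ.2, rfl⟩
  · intro z hz
    rw [Finset.mem_filter] at hz ⊢
    refine ⟨Finset.mem_univ _, ?_⟩
    have h2 : (z.1, c) = z := by
      have := hz.2
      ext
      · rfl
      · exact this.symm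
    rw [h2]
    exact hz.1
  · intro γ _
    rfl
  · intro z hz
    rw [Finset.mem_filter] at hz
    have := hz.2
    ext
    · rfl
    · exact this.symm
  · intro γ _
    rfl

end Helpers

open Filter

/-- with `H` an aperiodic generating set of `Γ` (of order `m`), a fixed
finite Cayley poset `P` of `ℓ` elements, and i.i.d. `H`-valued weights `ω(x)` on
`N = [n]` with common distribution `p` (positive on `H`, zero off `H`, total mass `1`),
the expected size of `F(N,ω,P) = { A ⊆ N : (ω(A), |A| - ⌊n/2⌋) ∈ P }` satisfies
`E[|F(N,ω,P)|] / C(n, ⌊n/2⌋) → ℓ/m`. -/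
theorem expected_family_size {Γ : Type*} [AddCommGroup Γ] [Fintype Γ] [DecidableEq Γ]
    (H : Set Γ) (hgen : AddSubgroup.closure H = ⊤) (haper : Aperiodic H)
    (P : Finset (Γ × ℤ))
    (p : Γ → ℝ) (hpos : ∀ η ∈ H, 0 < p η) (hzero : ∀ γ ∉ H, p γ = 0)
    (hsum : ∑ γ : Γ, p γ = 1) :
    Filter.Tendsto
      (fun n : ℕ =>
        (∑ ω : Fin n → Γ, (∏ x, p (ω x)) *
            (((Finset.univ : Finset (Fin n)).powerset.filter
              (fun A => (∑ x ∈ A, ω x, (A.card : ℤ) - (n / 2 : ℕ)) ∈ P)).card : ℝ)) /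
          (Nat.choose n (n / 2) : ℝ))
      Filter.atTop (nhds ((P.card : ℝ) / (Fintype.card Γ : ℝ))) := by
  classical
  have hp : ∀ γ : Γ, 0 ≤ p γ := by
    intro γ
    by_cases h : γ ∈ H
    · exact (hpos γ h).le
    · rw [hzero γ h]
  obtain ⟨k0, hk01, hk0⟩ := exists_k0 hgen haper
  have hq0 : ∀ γ : Γ, 0 < qd p k0 γ := fun γ => qd_pos hpos hp (hk0 k0 le_rfl γ)
  have hq_lim : ∀ γ : Γ, Tendsto (fun k => qd p k γ) atTop (nhds ((Fintype.card Γ : ℝ)⁻¹)) :=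
    fun γ => qd_tendsto hp hsum k0 hk01 hq0 γ
  set u : ℝ := (Fintype.card Γ : ℝ)⁻¹ with hu
  set E : ℕ → ℝ := fun n => ∑ ω : Fin n → Γ, (∏ x, p (ω x)) *
      (((Finset.univ : Finset (Fin n)).powerset.filter
        (fun A => (∑ x ∈ A, ω x, (A.card : ℤ) - (n / 2 : ℕ)) ∈ P)).card : ℝ) with hE
  have stepA : ∀ n : ℕ, E n = ∑ s ∈ Finset.range (n+1), (n.choose s : ℝ) *
      ∑ z ∈ P, (if z.2 = (s:ℤ) - ((n/2 : ℕ):ℤ) then qd p s z.1 else 0) := by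
    intro n
    rw [hE]
    have h1 : ∀ ω : Fin n → Γ,
        (((Finset.univ : Finset (Fin n)).powerset.filter
          (fun A => (∑ x ∈ A, ω x, (A.card : ℤ) - (n / 2 : ℕ)) ∈ P)).card : ℝ)
        = ∑ A ∈ (Finset.univ : Finset (Fin n)).powerset,
            (if (∑ x ∈ A, ω x, (A.card : ℤ) - ((n / 2 : ℕ):ℤ)) ∈ P then (1:ℝ) else 0) := by
      intro ω
      rw [Finset.card_filter]
      push_cast
      rfl
    calc ∑ ω : Fin n → Γ, (∏ x, p (ω x)) *
          (((Finset.univ : Finset (Fin n)).powerset.filter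
            (fun A => (∑ x ∈ A, ω x, (A.card : ℤ) - (n / 2 : ℕ)) ∈ P)).card : ℝ)
        = ∑ ω : Fin n → Γ, ∑ A ∈ (Finset.univ : Finset (Fin n)).powerset,
            (∏ x, p (ω x)) *
              (if (∑ x ∈ A, ω x, (A.card : ℤ) - ((n / 2 : ℕ):ℤ)) ∈ P then (1:ℝ) else 0) := by
          refine Finset.sum_congr rfl fun ω _ => ?_
          rw [h1 ω, Finset.mul_sum]
      _ = ∑ A ∈ (Finset.univ : Finset (Fin n)).powerset, ∑ ω : Fin n → Γ,
            (∏ x, p (ω x)) *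
              (if (∑ x ∈ A, ω x, (A.card : ℤ) - ((n / 2 : ℕ):ℤ)) ∈ P then (1:ℝ) else 0) :=
          Finset.sum_comm
      _ = ∑ A ∈ (Finset.univ : Finset (Fin n)).powerset, ∑ γ : Γ,
            qd p A.card γ * (if (γ, (A.card : ℤ) - ((n / 2 : ℕ):ℤ)) ∈ P then (1:ℝ) else 0) := by
          refine Finset.sum_congr rfl fun A _ => ?_
          exact key_lemma hsum n A (fun γ => if (γ, (A.card : ℤ) - ((n / 2 : ℕ):ℤ)) ∈ P then (1:ℝ) else 0)
      _ = ∑ A ∈ (Finset.univ : Finset (Fin n)).powerset,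
            ∑ z ∈ P, (if z.2 = (A.card : ℤ) - ((n / 2 : ℕ):ℤ) then qd p A.card z.1 else 0) := by
          refine Finset.sum_congr rfl fun A _ => ?_
          exact indicator_swap P A.card _
      _ = ∑ s ∈ Finset.range (n+1), (n.choose s : ℝ) *
            ∑ z ∈ P, (if z.2 = (s:ℤ) - ((n/2 : ℕ):ℤ) then qd p s z.1 else 0) := by
          rw [Finset.sum_powerset_apply_card
            (f := fun m => ∑ z ∈ P, (if z.2 = (m:ℤ) - ((n/2 : ℕ):ℤ) then qd p m z.1 else 0))]
          simp [Finset.card_univ, nsmul_eq_mul]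
  set σ : ℕ → Γ × ℤ → ℕ := fun n z => (((n/2 : ℕ):ℤ) + z.2).toNat with hσ
  set J : ℕ := P.sup (fun z => z.2.natAbs) with hJ
  have stepB : ∀ n : ℕ, 2*J ≤ n →
      E n = ∑ z ∈ P, (n.choose (σ n z) : ℝ) * qd p (σ n z) z.1 := by
    intro n hn
    rw [stepA n]
    have swap : ∑ s ∈ Finset.range (n+1), (n.choose s : ℝ) *
        ∑ z ∈ P, (if z.2 = (s:ℤ) - ((n/2 : ℕ):ℤ) then qd p s z.1 else 0)
        = ∑ z ∈ P, ∑ s ∈ Finset.range (n+1),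
            (if z.2 = (s:ℤ) - ((n/2 : ℕ):ℤ) then (n.choose s : ℝ) * qd p s z.1 else 0) := by
      rw [← Finset.sum_comm]
      refine Finset.sum_congr rfl fun s _ => ?_
      rw [Finset.mul_sum]
      exact Finset.sum_congr rfl fun z _ => by rw [mul_ite, mul_zero]
    rw [swap]
    refine Finset.sum_congr rfl fun z hz => ?_
    have hzJ : z.2.natAbs ≤ J := Finset.le_sup (f := fun z => z.2.natAbs) hz
    have hhalf : J ≤ n/2 := by omega
    have hnonneg : (0:ℤ) ≤ ((n/2 : ℕ):ℤ) + z.2 := by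
      have h1 : (z.2.natAbs : ℤ) ≤ (J:ℤ) := by exact_mod_cast hzJ
      have h2 : (J:ℤ) ≤ ((n/2 : ℕ):ℤ) := by exact_mod_cast hhalf
      omega
    have hub : ((n/2 : ℕ):ℤ) + z.2 ≤ (n:ℤ) := by
      have h1 : (z.2.natAbs : ℤ) ≤ (J:ℤ) := by exact_mod_cast hzJ
      have h3 : ((n/2 : ℕ):ℤ) + (J:ℤ) ≤ (n:ℤ) := by
        have h4 : n/2 + J ≤ n := by omega
        exact_mod_cast h4
      omega
    have hσval : ((σ n z : ℕ) : ℤ) = ((n/2 : ℕ):ℤ) + z.2 := Int.toNat_of_nonneg hnonneg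
    have hmem : σ n z ∈ Finset.range (n+1) := by
      rw [Finset.mem_range]
      omega
    have hrest : ∀ s ∈ Finset.range (n+1), s ≠ σ n z →
        (if z.2 = (s:ℤ) - ((n/2 : ℕ):ℤ) then (n.choose s : ℝ) * qd p s z.1 else 0) = 0 := by
      intro s _ hne
      rw [if_neg]
      intro hc
      apply hne
      omega
    rw [Finset.sum_eq_single_of_mem (σ n z) hmem hrest,
      if_pos (show z.2 = ((σ n z : ℕ):ℤ) - ((n/2 : ℕ):ℤ) by omega)]
  have hfinal : Tendsto (fun n => ∑ z ∈ P, ((n.choose (σ n z) : ℝ)/(n.choose (n/2) : ℝ)) *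
      qd p (σ n z) z.1) atTop (nhds (∑ z ∈ P, 1 * u)) := by
    refine tendsto_finset_sum _ fun z hz => ?_
    rcases le_or_gt 0 z.2 with hj | hj
    · have ha : ((z.2.toNat : ℕ):ℤ) = z.2 := Int.toNat_of_nonneg hj
      have hσeq : ∀ n, σ n z = n/2 + z.2.toNat := by
        intro n
        have h1 : ((n/2 : ℕ):ℤ) + z.2 = ((n/2 + z.2.toNat : ℕ):ℤ) := by push_cast [ha]; ring
        show (((n/2 : ℕ):ℤ) + z.2).toNat = _
        rw [h1, Int.toNat_natCast]
      have hratio := choose_ratio_up z.2.toNat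
      have hs : Tendsto (fun n : ℕ => n/2 + z.2.toNat) atTop atTop :=
        tendsto_atTop_atTop.mpr fun b => ⟨2*b, fun n hn => by omega⟩
      have hq := (hq_lim z.1).comp hs
      have hmul := hratio.mul hq
      refine hmul.congr fun n => ?_
      rw [hσeq n]
      rfl
    · set a := (-z.2).toNat with hadef
      have ha : ((a : ℕ):ℤ) = -z.2 := Int.toNat_of_nonneg (by omega)
      have hratio := choose_ratio_down a
      have hs : Tendsto (fun n : ℕ => n/2 - a) atTop atTop :=
        tendsto_atTop_atTop.mpr fun b => ⟨2*(b+a), fun n hn => by omega⟩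
      have hq := (hq_lim z.1).comp hs
      have hmul := hratio.mul hq
      refine hmul.congr' ?_
      filter_upwards [eventually_ge_atTop (2*a)] with n hn
      have h2 : a ≤ n/2 := by omega
      have hσeq : σ n z = n/2 - a := by
        have h1 : ((n/2 : ℕ):ℤ) + z.2 = ((n/2 - a : ℕ):ℤ) := by
          push_cast [h2]
          omega
        show (((n/2 : ℕ):ℤ) + z.2).toNat = _
        rw [h1, Int.toNat_natCast]
      rw [hσeq]
      rfl
  have hev : (fun n => E n / (n.choose (n/2) : ℝ)) =ᶠ[atTop]
      (fun n => ∑ z ∈ P, ((n.choose (σ n z) : ℝ)/(n.choose (n/2) : ℝ)) * qd p (σ n z) z.1) := by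
    filter_upwards [eventually_ge_atTop (2*J)] with n hn
    rw [stepB n hn, Finset.sum_div]
    exact Finset.sum_congr rfl fun z _ => (mul_div_right_comm _ _ _)
  have hval : ∑ z ∈ P, (1:ℝ) * u = (P.card : ℝ) / (Fintype.card Γ : ℝ) := by
    rw [Finset.sum_const, nsmul_eq_mul, hu, div_eq_mul_inv, one_mul]
  have hT := (Tendsto.congr' hev.symm hfinal)
  rwa [hval] at hT
end
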